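/- arXiv:math/0201298 — 7 statements merged into one kernel-verified Lean document; each statement's English description precedes it below -/
import Mathlib

section
/- In the Euclidean plane, no point x can have five distinct 'proper children' in its nearest neighbour graph: there do not exist distinct points x, x₁, ..., x₅ such that for each i, x is the unique nearest neighbour of xᵢ, and x's own nearest neighbour is distinct from each xᵢ. -/
/-!
Put `y` and the five children `c i` together: six rays leave `x`, so two of them, towards `p`
and `q` with `dist x p < dist x q`, make an angle at most `π / 3`. By the law of cosines `q` is
then strictly closer to `p` than to `x`. This is impossible if `q` is a child, whose nearest
neighbour is `x`, and if `q = y`, since `y` is the nearest neighbour of `x`.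
-/

open Real InnerProductGeometry Module
open scoped RealInnerProductSpace

theorem two_mul_pi_div_add_two_le_pi (n : ℕ) : 2 * π / (n + 2) ≤ π := by
  rw [div_le_iff₀ (by positivity)]
  nlinarith [pi_pos, (n.cast_nonneg : (0 : ℝ) ≤ n)]

/-- The `n + 1` consecutive gaps of `g` and the wrap-around gap
`2 * π - (g (Fin.last _) - g 0)` add up to `2 * π`, so one of them is at most `2 * π / (n + 2)`. -/
theorem exists_ne_cos_le_cos_sub_of_monotone {n : ℕ} {g : Fin (n + 2) → ℝ} (hg : Monotone g)
    (hspan : g (Fin.last _) - g 0 < 2 * π) :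
    ∃ i j, i ≠ j ∧ cos (2 * π / (n + 2)) ≤ cos (g i - g j) := by
  set δ := 2 * π / (n + 2) with hδ
  have hδπ : δ ≤ π := two_mul_pi_div_add_two_le_pi n
  by_contra! h
  have hgap (i : Fin (n + 1)) : δ < g i.succ - g i.castSucc := by
    by_contra! hi
    exact (h _ _ Fin.castSucc_lt_succ.ne').not_ge <|
      cos_le_cos_of_nonneg_of_le_pi (sub_nonneg.2 (hg (Fin.castSucc_le_succ i))) hδπ hi
  have hgrow (i : Fin (n + 2)) : g 0 + i * δ ≤ g i := by
    induction i using Fin.induction with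
    | zero => simp
    | succ i ih =>
      have := hgap i
      simp only [Fin.val_succ, Fin.val_castSucc, Nat.cast_succ] at ih ⊢
      linarith
  have hlast := hgrow (Fin.last _)
  have hnδ : ((Fin.last (n + 1) : ℕ) : ℝ) * δ = 2 * π - δ := by
    simp only [Fin.val_last, Nat.cast_succ, hδ]
    field_simp
    ring
  refine (h (Fin.last _) 0 Fin.last_pos.ne').not_ge ?_
  rw [← cos_two_pi_sub (g _ - g 0)]
  exact cos_le_cos_of_nonneg_of_le_pi (by linarith) hδπ (by linarith)

theorem exists_ne_cos_le_cos_sub {n : ℕ} (θ : Fin (n + 2) → ℝ)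
    (hθ : ∀ i j, θ i - θ j < 2 * π) :
    ∃ i j, i ≠ j ∧ cos (2 * π / (n + 2)) ≤ cos (θ i - θ j) := by
  obtain ⟨i, j, hij, h⟩ :=
    exists_ne_cos_le_cos_sub_of_monotone (Tuple.monotone_sort θ) (hθ _ _)
  exact ⟨_, _, (Tuple.sort θ).injective.ne hij, h⟩

theorem Complex.inner_eq_norm_mul_norm_mul_cos_arg_sub (x y : ℂ) :
    ⟪x, y⟫ = ‖x‖ * ‖y‖ * Real.cos (x.arg - y.arg) := by
  rw [Complex.inner, Real.cos_sub, Complex.mul_re, Complex.conj_re, Complex.conj_im]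
  linear_combination (-y.re) * norm_mul_cos_arg x - (‖x‖ * Real.cos x.arg) * norm_mul_cos_arg y
    - y.im * norm_mul_sin_arg x - (‖x‖ * Real.sin x.arg) * norm_mul_sin_arg y

theorem Complex.cos_angle_eq_cos_arg_sub {x y : ℂ} (hx : x ≠ 0) (hy : y ≠ 0) :
    Real.cos (angle x y) = Real.cos (x.arg - y.arg) := by
  rw [cos_angle, inner_eq_norm_mul_norm_mul_cos_arg_sub, mul_div_cancel_left₀ _ (by positivity)]

theorem Complex.exists_ne_angle_le {n : ℕ} (z : Fin (n + 2) → ℂ) (hz : ∀ i, z i ≠ 0) :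
    ∃ i j, i ≠ j ∧ angle (z i) (z j) ≤ 2 * π / (n + 2) := by
  obtain ⟨i, j, hij, h⟩ := exists_ne_cos_le_cos_sub (fun i ↦ (z i).arg) fun i j ↦ by
    linarith [arg_le_pi (z i), neg_pi_lt_arg (z j)]
  have hδ : 2 * π / (n + 2) ∈ Set.Icc 0 π := ⟨by positivity, two_mul_pi_div_add_two_le_pi n⟩
  refine ⟨i, j, hij, (strictAntiOn_cos.le_iff_ge hδ ⟨angle_nonneg _ _, angle_le_pi _ _⟩).1 ?_⟩
  rwa [cos_angle_eq_cos_arg_sub (hz i) (hz j)]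

variable {V P : Type*} [NormedAddCommGroup V] [InnerProductSpace ℝ V]

theorem InnerProductGeometry.exists_ne_angle_le_of_finrank_eq_two [Fact (finrank ℝ V = 2)]
    {n : ℕ} (v : Fin (n + 2) → V) (hv : ∀ i, v i ≠ 0) :
    ∃ i j, i ≠ j ∧ angle (v i) (v j) ≤ 2 * π / (n + 2) := by
  have := FiniteDimensional.of_fact_finrank_eq_two (K := ℝ) (V := V)
  let f : V ≃ₗᵢ[ℝ] ℂ := ((stdOrthonormalBasis ℝ V).reindex (finCongr Fact.out)).repr.trans
    Complex.orthonormalBasisOneI.repr.symm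
  obtain ⟨i, j, hij, h⟩ := Complex.exists_ne_angle_le (f ∘ v) fun i ↦ f.map_ne_zero_iff.2 (hv i)
  exact ⟨i, j, hij, (f.toLinearIsometry.angle_map (v i) (v j)).symm.trans_le h⟩

variable [MetricSpace P] [NormedAddTorsor V P]

namespace EuclideanGeometry

theorem dist_lt_of_angle_le_pi_div_three {p x q : P} (hpx : p ≠ x)
    (hangle : ∠ p x q ≤ π / 3) (hlt : dist x p < dist x q) : dist q p < dist q x := by
  have hcos : 1 / 2 ≤ cos (∠ p x q) := by
    rw [← cos_pi_div_three]
    exact cos_le_cos_of_nonneg_of_le_pi (angle_nonneg _ _ _) (by linarith [pi_pos]) hangle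
  have hlaw := law_cos p x q
  have hp : 0 < dist p x := dist_pos.2 hpx
  rw [dist_comm x p, dist_comm x q] at hlt
  rw [dist_comm q p]
  refine lt_of_pow_lt_pow_left₀ 2 dist_nonneg ?_
  nlinarith [mul_pos hp (sub_pos.2 hlt),
    mul_nonneg (mul_nonneg hp.le (dist_nonneg : 0 ≤ dist q x)) (sub_nonneg.2 hcos)]

theorem exists_dist_lt_dist_of_fin_six [Fact (finrank ℝ V = 2)] (x : P) (p : Fin 6 → P)
    (hpx : ∀ i, p i ≠ x) (hp : Pairwise fun i j ↦ dist x (p i) ≠ dist x (p j)) :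
    ∃ i j, dist x (p i) < dist x (p j) ∧ dist (p j) (p i) < dist (p j) x := by
  obtain ⟨i, j, hij, hangle⟩ := exists_ne_angle_le_of_finrank_eq_two (n := 4) (fun i ↦ p i -ᵥ x)
    fun i ↦ vsub_ne_zero.2 (hpx i)
  replace hangle : ∠ (p i) x (p j) ≤ π / 3 := hangle.trans_eq (by push_cast; ring)
  rcases (hp hij).lt_or_gt with h | h
  · exact ⟨i, j, h, dist_lt_of_angle_le_pi_div_three (hpx i) hangle h⟩
  · exact ⟨j, i, h, dist_lt_of_angle_le_pi_div_three (hpx j) (angle_comm (p i) x (p j) ▸ hangle) h⟩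

end EuclideanGeometry

/-- In the Euclidean plane, no point `x` of a finite set with distinct
pairwise distances can have five distinct proper children in the nearest
neighbour graph. -/
theorem stmt_4 (X : Finset (EuclideanSpace ℝ (Fin 2)))
    (hdist : ∀ x ∈ X, ∀ y ∈ X, ∀ x' ∈ X, ∀ y' ∈ X, x ≠ y → x' ≠ y' →
      dist x y = dist x' y' →
      ({x, y} : Set (EuclideanSpace ℝ (Fin 2))) = {x', y'})
    (x y : EuclideanSpace ℝ (Fin 2)) (c : Fin 5 → EuclideanSpace ℝ (Fin 2))
    (hx : x ∈ X) (hy : y ∈ X) (hc : ∀ i, c i ∈ X)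
    (hcinj : Function.Injective c) (hcx : ∀ i, c i ≠ x)
    -- `x` is the unique nearest neighbour of each `c i`
    (hnn : ∀ i, ∀ z ∈ X, z ≠ c i → z ≠ x → dist (c i) x < dist (c i) z)
    -- `y` is the unique nearest neighbour of `x`, and is none of the `c i`
    (hyx : y ≠ x)
    (hynn : ∀ z ∈ X, z ≠ x → z ≠ y → dist x y < dist x z)
    (hyc : ∀ i, y ≠ c i) :
    False := by
  have : Fact (finrank ℝ (EuclideanSpace ℝ (Fin 2)) = 2) := ⟨finrank_euclideanSpace_fin⟩
  let p : Fin 6 → EuclideanSpace ℝ (Fin 2) := Fin.cons y c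
  have hpX : ∀ i, p i ∈ X := Fin.cases hy hc
  have hpx : ∀ i, p i ≠ x := Fin.cases hyx hcx
  have hpinj : Function.Injective p :=
    Fin.cons_injective_iff.2 ⟨fun ⟨i, hi⟩ ↦ hyc i hi.symm, hcinj⟩
  have hpdist : Pairwise fun i j ↦ dist x (p i) ≠ dist x (p j) := fun i j hij h ↦ by
    rcases Set.pair_eq_pair_iff.1 (hdist x hx _ (hpX i) x hx _ (hpX j) (hpx i).symm
      (hpx j).symm h) with ⟨-, h⟩ | ⟨-, h⟩
    exacts [hij (hpinj h), hpx i h]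
  obtain ⟨i, j, hnear, hcloser⟩ := EuclideanGeometry.exists_dist_lt_dist_of_fin_six x p hpx hpdist
  have hij : p i ≠ p j := fun h ↦ hnear.ne (congrArg (dist x) h)
  cases j using Fin.cases with
  | zero => exact (hynn _ (hpX i) (hpx i) hij).not_gt hnear
  | succ k => exact (hnn k _ (hpX i) hij (hpx i)).not_gt hcloser
end

section
/- Of any six distinct rays emanating from a common point in the Euclidean plane, at least two make an angle of at most π/3 with each other. -/
/-!
Measure the rays by their oriented angle from one fixed ray. If another ray lies within
`δ = 2π / N` of it we are done; otherwise the other `N - 1` rays lie on the arc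
`(δ, 2π - δ]`, which is covered by `N - 2` half-open arcs of length `δ`, so two of them
share an arc.
-/

open Real Set

theorem Int.abs_sub_lt_one_of_ceil_eq_ceil {R : Type*} [Ring R] [LinearOrder R] [FloorRing R]
    [IsOrderedRing R] {x y : R} (h : ⌈x⌉ = ⌈y⌉) : |x - y| < 1 := by
  have hfloor : ⌊-y⌋ = ⌊-x⌋ := by rw [Int.floor_neg, Int.floor_neg, h]
  simpa only [neg_sub_neg] using Int.abs_sub_lt_one_of_floor_eq_floor hfloor

theorem exists_ne_abs_sub_lt_of_forall_mem_Ioc {K ι : Type*} [Field K] [LinearOrder K]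
    [IsStrictOrderedRing K] [FloorRing K] [Fintype ι] {f : ι → K} {a δ : K} {n : ℕ}
    (hδ : 0 < δ) (hn : n < Fintype.card ι) (hf : ∀ i, f i ∈ Ioc a (a + n * δ)) :
    ∃ i j, i ≠ j ∧ |f i - f j| < δ := by
  have hg : ∀ i ∈ Finset.univ, ⌈(f i - a) / δ⌉ ∈ Finset.Icc (1 : ℤ) n := fun i _ => by
    obtain ⟨h₁, h₂⟩ := hf i
    rw [Finset.mem_Icc, Int.one_le_ceil_iff, Int.ceil_le, Int.cast_natCast, div_le_iff₀ hδ]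
    exact ⟨div_pos (by linarith) hδ, by linarith⟩
  obtain ⟨i, -, j, -, hij, hgij⟩ :=
    Finset.exists_ne_map_eq_of_card_lt_of_maps_to (by simpa using hn) hg
  refine ⟨i, j, hij, ?_⟩
  have := Int.abs_sub_lt_one_of_ceil_eq_ceil hgij
  rwa [← sub_div, sub_sub_sub_cancel_right, abs_div, abs_of_pos hδ, div_lt_one hδ] at this

theorem Real.Angle.abs_toReal_coe_le (x : ℝ) : |(x : Real.Angle).toReal| ≤ |x| := by
  by_cases hx : x ∈ Ioc (-π) π
  · rw [Real.Angle.toReal_coe_eq_self_iff_mem_Ioc.2 hx]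
  · refine (Real.Angle.abs_toReal_le_pi _).trans ?_
    rw [Set.mem_Ioc, not_and_or, not_lt, not_le] at hx
    rcases hx with hx | hx
    · rw [abs_of_neg (by linarith [pi_pos])]; linarith
    · rw [abs_of_pos (by linarith [pi_pos])]; linarith

theorem Real.Angle.exists_ne_abs_toReal_sub_le {ι : Type*} [Fintype ι]
    (hι : 2 ≤ Fintype.card ι) (θ : ι → Real.Angle) :
    ∃ i j, i ≠ j ∧ |(θ i - θ j).toReal| ≤ 2 * π / Fintype.card ι := by
  classical
  obtain ⟨m, hm⟩ : ∃ m, Fintype.card ι = m + 2 := ⟨_, (Nat.sub_add_cancel hι).symm⟩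
  set δ := 2 * π / Fintype.card ι
  have hδ : 0 < δ := div_pos two_pi_pos (by rw [hm]; positivity)
  have hδm : δ + m * δ = 2 * π - δ := by
    have : ((m : ℝ) + 2) * δ = 2 * π := by
      rw [← Nat.cast_ofNat, ← Nat.cast_add, ← hm]
      exact mul_div_cancel₀ _ (by rw [hm]; positivity)
    linarith
  obtain ⟨i₀⟩ : Nonempty ι := Fintype.card_pos_iff.1 (by omega)
  by_cases hnear : ∃ j, j ≠ i₀ ∧ |(θ j - θ i₀).toReal| ≤ δ
  · obtain ⟨j, hj, h⟩ := hnear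
    exact ⟨j, i₀, hj, h⟩
  push Not at hnear
  let t : {j // j ≠ i₀} → ℝ := fun j => (θ j - θ i₀).toReal
  let s : {j // j ≠ i₀} → ℝ := fun j => if 0 ≤ t j then t j else t j + 2 * π
  have hs_coe : ∀ j, (s j : Real.Angle) = θ j - θ i₀ := fun j => by
    by_cases h : 0 ≤ t j <;> simp [s, h, t]
  have hs_mem : ∀ j, s j ∈ Ioc δ (δ + m * δ) := fun j => by
    have hj := hnear j j.2
    have := (θ j - θ i₀).neg_pi_lt_toReal
    have := (θ j - θ i₀).toReal_le_pi
    rw [hδm]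
    by_cases h : 0 ≤ t j
    · rw [abs_of_nonneg h] at hj
      simp only [s, if_pos h, Set.mem_Ioc]; constructor <;> linarith
    · rw [abs_of_neg (not_le.1 h)] at hj
      simp only [s, if_neg h, Set.mem_Ioc]; constructor <;> linarith
  obtain ⟨j, k, hjk, h⟩ := exists_ne_abs_sub_lt_of_forall_mem_Ioc hδ (by simp [hm]) hs_mem
  refine ⟨j, k, fun h => hjk (Subtype.ext h), ?_⟩
  calc |(θ j - θ k).toReal| = |((s j - s k : ℝ) : Real.Angle).toReal| := by
        rw [Real.Angle.coe_sub, hs_coe, hs_coe, sub_sub_sub_cancel_right]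
    _ ≤ |s j - s k| := Real.Angle.abs_toReal_coe_le _
    _ ≤ δ := h.le

theorem InnerProductGeometry.exists_ne_angle_le_two_pi_div_card {V ι : Type*}
    [NormedAddCommGroup V] [InnerProductSpace ℝ V] [Fact (Module.finrank ℝ V = 2)] [Fintype ι]
    (hι : 2 ≤ Fintype.card ι) {u : ι → V} (hu : ∀ i, u i ≠ 0) :
    ∃ i j, i ≠ j ∧ angle (u i) (u j) ≤ 2 * π / Fintype.card ι := by
  have := FiniteDimensional.of_fact_finrank_eq_two (K := ℝ) (V := V)
  let o : Orientation ℝ V (Fin 2) := (Module.finBasisOfFinrankEq ℝ V Fact.out).orientation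
  obtain ⟨i₀⟩ : Nonempty ι := Fintype.card_pos_iff.1 (by omega)
  obtain ⟨i, j, hij, h⟩ :=
    Real.Angle.exists_ne_abs_toReal_sub_le hι fun i => o.oangle (u i₀) (u i)
  refine ⟨j, i, hij.symm, ?_⟩
  rwa [o.angle_eq_abs_oangle_toReal (hu j) (hu i), ← o.oangle_sub_left (hu i₀) (hu j) (hu i)]

theorem stmt_5_general (u : Fin 6 → EuclideanSpace ℝ (Fin 2))
    (hunit : ∀ i, ‖u i‖ = 1) :
    ∃ i j, i ≠ j ∧ InnerProductGeometry.angle (u i) (u j) ≤ Real.pi / 3 := by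
  have : Fact (Module.finrank ℝ (EuclideanSpace ℝ (Fin 2)) = 2) :=
    ⟨finrank_euclideanSpace_fin⟩
  have hu : ∀ i, u i ≠ 0 := fun i => norm_ne_zero_iff.1 (by simp [hunit])
  obtain ⟨i, j, hij, h⟩ := InnerProductGeometry.exists_ne_angle_le_two_pi_div_card (by simp) hu
  refine ⟨i, j, hij, h.trans_eq ?_⟩
  rw [Fintype.card_fin]
  ring

/-- Of any six distinct rays (identified with unit vectors) from a common
point in the Euclidean plane, two make an angle of at most `π / 3`. -/
theorem stmt_5 (u : Fin 6 → EuclideanSpace ℝ (Fin 2))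
    (hunit : ∀ i, ‖u i‖ = 1) (hinj : Function.Injective u) :
    ∃ i j, i ≠ j ∧ InnerProductGeometry.angle (u i) (u j) ≤ Real.pi / 3 :=
  stmt_5_general u hunit
end

section
/- In any finite subset X of the Euclidean plane with all pairwise distances distinct and |X| ≥ 2, at most 7/9 of the elements of X fail to be the nearest neighbour of some other element, i.e., |{x ∈ X : ∀y ∈ X \ {x}, nn(y) ≠ x}| ≤ (7/9)|X|. -/
/-!
Every point `y` has a unique nearest neighbour `nn y`, so `#X` is the sum of the fibre sizes of
`nn` over its image `T`. The points of a fibre `nn⁻¹(x)`, together with `nn x`, are each closer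
to `x` than to one another, so seen from `x` their directions are pairwise more than `π / 3`
apart: a fibre has at most five points, and a fibre of five forces `nn (nn x) = x`.

Two mutual nearest neighbours `x`, `y` cannot both have five-point fibres. Otherwise the four
other points of the fibre of `x` span an angle of at least `π` around `x`, and likewise at `y`.
This gives, on each side of the line `xy`, a point `z` of the first fibre and a point `w` of the
second at angles `∠yxz`, `∠xyw` in `(π / 3, 2π / 3)`. The four angles add up to at most `2π`,
so on one side `∠yxz + ∠xyw ≤ π`, and there `|zw| < max |xz| |yw|`, contradicting `nn z = x`
or `nn w = y`.

Hence the full fibres inject into the others, `#X ≤ 4 #T + #T / 2`, and at least `2/9` of the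
points are somebody's nearest neighbour.
-/

open Finset Real

section NearestNeighbour

variable {α : Type*} [MetricSpace α]

/-- `IsNN X y x`: `x` is the nearest neighbour of `y` in `X`. -/
structure IsNN (X : Finset α) (y x : α) : Prop where
  right_mem : x ∈ X
  left_mem : y ∈ X
  ne : y ≠ x
  dist_lt : ∀ z ∈ X, z ≠ y → z ≠ x → dist y x < dist y z

lemma isNN_iff {X : Finset α} {y x : α} :
    IsNN X y x ↔ x ∈ X ∧ y ∈ X ∧ y ≠ x ∧ ∀ z ∈ X, z ≠ y → z ≠ x → dist y x < dist y z :=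
  ⟨fun ⟨h₁, h₂, h₃, h₄⟩ => ⟨h₁, h₂, h₃, h₄⟩, fun ⟨h₁, h₂, h₃, h₄⟩ => ⟨h₁, h₂, h₃, h₄⟩⟩

open scoped Classical in
noncomputable def nnPreimage (X : Finset α) (x : α) : Finset α :=
  {y ∈ X | IsNN X y x}

variable {X : Finset α} {x y z w : α}

lemma mem_nnPreimage : y ∈ nnPreimage X x ↔ IsNN X y x := by
  classical
  simp only [nnPreimage, mem_filter, and_iff_right_iff_imp]
  exact IsNN.left_mem

lemma IsNN.unique (h : IsNN X y x) (h' : IsNN X y z) : x = z := by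
  by_contra hxz
  have := h.dist_lt z h'.right_mem h'.ne.symm (Ne.symm hxz)
  have := h'.dist_lt x h.right_mem h.ne.symm hxz
  linarith

lemma injOn_dist_erase [DecidableEq α]
    (hdist : ∀ x ∈ X, ∀ y ∈ X, ∀ x' ∈ X, ∀ y' ∈ X, x ≠ y → x' ≠ y' →
      dist x y = dist x' y' → ({x, y} : Set α) = {x', y'})
    (hy : y ∈ X) : Set.InjOn (dist y) (X.erase y) := by
  intro x hx z hz h
  have := hdist y hy x (mem_of_mem_erase hx) y hy z (mem_of_mem_erase hz)
    (ne_of_mem_erase hx).symm (ne_of_mem_erase hz).symm h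
  rcases Set.pair_eq_pair_iff.1 this with ⟨-, h⟩ | ⟨h, -⟩
  exacts [h, absurd h.symm (ne_of_mem_erase hz)]

lemma exists_isNN [DecidableEq α] (hX : 2 ≤ #X) (hy : y ∈ X)
    (hinj : Set.InjOn (dist y) (X.erase y)) : ∃ x, IsNN X y x := by
  have hne : (X.erase y).Nonempty := by
    rw [← card_pos, card_erase_of_mem hy]; omega
  obtain ⟨x, hx, hmin⟩ := exists_min_image (X.erase y) (dist y) hne
  refine ⟨x, mem_of_mem_erase hx, hy, (ne_of_mem_erase hx).symm, fun z hz hzy hzx => ?_⟩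
  have hz' : z ∈ X.erase y := mem_erase.2 ⟨hzy, hz⟩
  exact (hmin z hz').lt_of_ne fun h => hzx (hinj hz' hx h.symm)

lemma dist_lt_of_mem_nnPreimage (hy : y ∈ nnPreimage X x) (hz : z ∈ nnPreimage X x)
    (hyz : y ≠ z) : dist y x < dist y z := by
  rw [mem_nnPreimage] at hy hz
  exact hy.dist_lt z hz.left_mem hyz.symm hz.ne

lemma IsNN.dist_lt_of_mem_nnPreimage (hxy : IsNN X x y) (hz : z ∈ nnPreimage X x)
    (hzy : z ≠ y) : dist x y < dist z x := by
  rw [mem_nnPreimage] at hz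
  rw [dist_comm z]
  exact hxy.dist_lt z hz.left_mem hz.ne hzy

lemma max_dist_lt_dist (hxy : x ≠ y) (hz : z ∈ nnPreimage X x) (hzy : z ≠ y)
    (hw : w ∈ nnPreimage X y) (hwx : w ≠ x) : max (dist z x) (dist w y) < dist z w := by
  rw [mem_nnPreimage] at hz hw
  have hwz : w ≠ z := fun h => hxy (hz.unique (h ▸ hw))
  exact max_lt (hz.dist_lt w hw.left_mem hwz hwx)
    ((hw.dist_lt z hz.left_mem hwz.symm hzy).trans_eq (dist_comm w z))

lemma dist_lt_of_mem_insert_nnPreimage [DecidableEq α] (hx : IsNN X x y)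
    (hz : z ∈ insert y (nnPreimage X x)) (hw : w ∈ insert y (nnPreimage X x))
    (hzw : z ≠ w) : dist z x < dist z w := by
  have key : ∀ p ∈ nnPreimage X x, p ≠ y → dist p x < dist p y ∧ dist y x < dist y p := by
    intro p hp hpy
    have h₁ := (mem_nnPreimage.1 hp).dist_lt y hx.right_mem hpy.symm hx.ne.symm
    refine ⟨h₁, ?_⟩
    rw [dist_comm y x, dist_comm y p]
    exact (hx.dist_lt_of_mem_nnPreimage hp hpy).trans h₁
  rcases mem_insert.1 hz with rfl | hz₀ <;> rcases mem_insert.1 hw with rfl | hw₀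
  · exact absurd rfl hzw
  · exact (key w hw₀ (Ne.symm hzw)).2
  · exact (key z hz₀ hzw).1
  · exact dist_lt_of_mem_nnPreimage hz₀ hw₀ hzw

section NearestNeighbourFunction

variable {nn : α → α} (hnn : ∀ y ∈ X, IsNN X y (nn y))
include hnn

lemma isNN_iff_eq (hy : y ∈ X) : IsNN X y x ↔ nn y = x :=
  ⟨(hnn y hy).unique, fun h => h ▸ hnn y hy⟩

lemma filter_eq_nnPreimage [DecidableEq α] (x : α) : {y ∈ X | nn y = x} = nnPreimage X x := by
  ext y
  simp only [mem_filter, mem_nnPreimage]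
  exact ⟨fun h => (isNN_iff_eq hnn h.1).2 h.2,
    fun h => ⟨h.left_mem, (isNN_iff_eq hnn h.left_mem).1 h⟩⟩

lemma coe_sdiff_image_eq [DecidableEq α] :
    ↑(X \ X.image nn) = {x | x ∈ X ∧ ∀ y ∈ X, y ≠ x →
      ¬ (∀ z ∈ X, z ≠ y → z ≠ x → dist y x < dist y z)} := by
  ext x
  simp only [Set.mem_ofPred_eq, coe_sdiff, Set.mem_sdiff, mem_coe, mem_image, not_exists,
    not_and]
  refine and_congr_right fun hx => forall₂_congr fun y hy => ?_
  rw [← isNN_iff_eq hnn hy, isNN_iff]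
  tauto

end NearestNeighbourFunction

variable {β : Type*} [MetricSpace β] {f : α → β} {c : ℝ}

lemma injective_of_dist_eq_mul (hc : 0 < c) (hf : ∀ p q, dist (f p) (f q) = c * dist p q) :
    Function.Injective f := fun p q h => by
  simpa [hf, hc.ne'] using dist_eq_zero.2 h

lemma isNN_image_iff [DecidableEq β] (hc : 0 < c)
    (hf : ∀ p q, dist (f p) (f q) = c * dist p q) :
    IsNN (X.image f) (f y) (f x) ↔ IsNN X y x := by
  have hinj := injective_of_dist_eq_mul hc hf
  simp only [isNN_iff, hinj.mem_finset_image, hinj.ne_iff, forall_mem_image, hf,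
    mul_lt_mul_iff_right₀ hc]

lemma card_nnPreimage_image [DecidableEq β] (hc : 0 < c)
    (hf : ∀ p q, dist (f p) (f q) = c * dist p q) :
    #(nnPreimage (X.image f) (f x)) = #(nnPreimage X x) := by
  rw [← card_image_of_injective _ (injective_of_dist_eq_mul hc hf)]
  congr 1
  ext p
  simp only [mem_image, mem_nnPreimage]
  constructor
  · rintro h
    obtain ⟨q, -, rfl⟩ := mem_image.1 h.left_mem
    exact ⟨q, (isNN_image_iff hc hf).1 h, rfl⟩
  · rintro ⟨q, hq, rfl⟩
    exact (isNN_image_iff hc hf).2 hq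

end NearestNeighbour

lemma two_mul_card_le_mul_card_image {ι : Type*} [DecidableEq ι] {s : Finset ι} {f : ι → ι}
    (k : ℕ) (hmaps : ∀ x ∈ s, f x ∈ s) (hfib : ∀ x ∈ s, #{y ∈ s | f y = x} ≤ k + 1)
    (hsymm : ∀ x ∈ s, k + 1 ≤ #{y ∈ s | f y = x} → f (f x) = x)
    (hfull : ∀ x ∈ s, f (f x) = x → k + 1 ≤ #{y ∈ s | f y = x} →
      #{y ∈ s | f y = f x} < k + 1) :
    2 * #s ≤ (2 * k + 1) * #(s.image f) := by
  set T := s.image f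
  set F := T.filter fun x => k + 1 ≤ #{y ∈ s | f y = x}
  have hTs : T ⊆ s := image_subset_iff.2 hmaps
  have hsum : #s ≤ k * #T + #F := by
    rw [card_eq_sum_card_image f s, card_filter, mul_comm, ← smul_eq_mul, ← sum_const,
      ← sum_add_distrib]
    refine sum_le_sum fun x hx => ?_
    have := hfib x (hTs hx)
    split_ifs <;> omega
  have hF : #F ≤ #(T \ F) := by
    refine card_le_card_of_injOn f (fun x hx => ?_) fun x₁ hx₁ x₂ hx₂ h => ?_
    · obtain ⟨hxT, hxfull⟩ := mem_filter.1 hx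
      have hx := hTs hxT
      refine mem_sdiff.2 ⟨mem_image_of_mem f hx, fun hfx => ?_⟩
      exact (hfull x hx (hsymm x hx hxfull) hxfull).not_ge (mem_filter.1 hfx).2
    · obtain ⟨hx₁T, hx₁⟩ := mem_filter.1 hx₁
      obtain ⟨hx₂T, hx₂⟩ := mem_filter.1 hx₂
      rw [← hsymm x₁ (hTs hx₁T) hx₁, ← hsymm x₂ (hTs hx₂T) hx₂, h]
  have : #(T \ F) + #F = #T := card_sdiff_add_card_eq_card (filter_subset _ _)
  linarith

lemma exists_card_sub_one_mul_le_sub {ι : Type*} [DecidableEq ι] {S : Finset ι}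
    (hS : S.Nonempty) (f : ι → ℝ) {δ : ℝ} (h : ∀ p ∈ S, ∀ q ∈ S, p ≠ q → δ ≤ |f p - f q|) :
    ∃ p ∈ S, ∃ q ∈ S, ((#S : ℝ) - 1) * δ ≤ f q - f p := by
  induction S using Finset.induction_on_max_value f with
  | empty => exact absurd hS Finset.not_nonempty_empty
  | insert a S haS hmax ih =>
    rcases S.eq_empty_or_nonempty with rfl | hne
    · exact ⟨a, mem_insert_self _ _, a, mem_insert_self _ _, by simp⟩
    obtain ⟨p, hp, q, hq, hpq⟩ := ih hne fun p hp q hq =>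
      h p (mem_insert_of_mem hp) q (mem_insert_of_mem hq)
    have hqa : δ ≤ f a - f q := by
      have := h a (mem_insert_self _ _) q (mem_insert_of_mem hq) (by rintro rfl; exact haS hq)
      rwa [abs_of_nonneg (sub_nonneg.2 (hmax q hq))] at this
    refine ⟨p, mem_insert_of_mem hp, a, mem_insert_self _ _, ?_⟩
    rw [card_insert_of_notMem haS]
    push_cast
    linarith

section Angles

lemma half_le_cos_of_abs_le {x : ℝ} (h : |x| ≤ π / 3) : 1 / 2 ≤ cos x := by
  rw [← cos_abs, ← cos_pi_div_three]
  exact cos_le_cos_of_nonneg_of_le_pi (abs_nonneg x) (by linarith [pi_pos]) h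

lemma pi_div_three_lt_abs_sub_int_mul {d : ℝ} (h : cos d < 1 / 2) (k : ℤ) :
    π / 3 < |d - k * (2 * π)| := by
  by_contra! hk
  have := half_le_cos_of_abs_le hk
  rw [cos_sub_int_mul_two_pi] at this
  linarith

/-- The counterclockwise angle from the direction `c` to the direction `θ`, in `[0, 2π)`. -/
noncomputable def ccwAngle (c θ : ℝ) : ℝ :=
  toIcoMod two_pi_pos 0 (θ - c)

lemma ccwAngle_mem_Ico (c θ : ℝ) : ccwAngle c θ ∈ Set.Ico 0 (2 * π) := by
  simpa [ccwAngle] using toIcoMod_mem_Ico two_pi_pos 0 (θ - c)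

lemma exists_ccwAngle_eq (c θ : ℝ) : ∃ k : ℤ, ccwAngle c θ = θ - c - k * (2 * π) :=
  ⟨toIcoDiv two_pi_pos 0 (θ - c), by
    rw [← zsmul_eq_mul, ← self_sub_toIcoMod, sub_sub_cancel, ccwAngle]⟩

lemma cos_ccwAngle (c θ : ℝ) : cos (ccwAngle c θ) = cos (θ - c) := by
  obtain ⟨k, hk⟩ := exists_ccwAngle_eq c θ
  rw [hk, cos_sub_int_mul_two_pi]

lemma sin_ccwAngle (c θ : ℝ) : sin (ccwAngle c θ) = sin (θ - c) := by
  obtain ⟨k, hk⟩ := exists_ccwAngle_eq c θ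
  rw [hk, sin_sub_int_mul_two_pi]

lemma ccwAngle_mem_Ioo {c θ : ℝ} (h : cos (θ - c) < 1 / 2) :
    ccwAngle c θ ∈ Set.Ioo (π / 3) (5 * π / 3) := by
  obtain ⟨k, hk⟩ := exists_ccwAngle_eq c θ
  obtain ⟨h0, h2π⟩ := ccwAngle_mem_Ico c θ
  have h₁ := pi_div_three_lt_abs_sub_int_mul h k
  have h₂ := pi_div_three_lt_abs_sub_int_mul h (k + 1)
  rw [← hk, abs_of_nonneg h0] at h₁
  rw [Int.cast_add, Int.cast_one, add_mul, one_mul, ← sub_sub, ← hk,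
    abs_of_neg (by linarith)] at h₂
  constructor <;> linarith

lemma pi_div_three_le_abs_ccwAngle_sub {θ θ' : ℝ} (h : cos (θ - θ') < 1 / 2) (c : ℝ) :
    π / 3 ≤ |ccwAngle c θ - ccwAngle c θ'| := by
  obtain ⟨k, hk⟩ := exists_ccwAngle_eq c θ
  obtain ⟨k', hk'⟩ := exists_ccwAngle_eq c θ'
  have := pi_div_three_lt_abs_sub_int_mul h (k - k')
  rw [hk, hk']
  push_cast at this
  exact this.le.trans_eq (congrArg abs (by ring))

lemma one_add_cos_add_le {α β : ℝ} (hα : 0 ≤ α) (hβ : 0 ≤ β) (hαβ : α + β ≤ π) :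
    1 + cos (α + β) ≤ cos α + cos β := by
  have key : cos α + cos β - (1 + cos (α + β))
      = 4 * cos ((α + β) / 2) * sin (α / 2) * sin (β / 2) := by
    have ha : α = 2 * (α / 2) := by ring
    have hb : β = 2 * (β / 2) := by ring
    have hab : (α + β) / 2 = α / 2 + β / 2 := by ring
    conv_lhs => rw [ha, hb, ← mul_add]
    rw [hab, cos_two_mul, cos_two_mul, cos_two_mul, cos_add]
    linear_combination 2 * sin (β / 2) ^ 2 * sin_sq_add_cos_sq (α / 2)
      + (2 - 2 * cos (α / 2) ^ 2) * sin_sq_add_cos_sq (β / 2)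
  have h₁ : 0 ≤ cos ((α + β) / 2) := cos_nonneg_of_mem_Icc ⟨by linarith, by linarith⟩
  have h₂ : 0 ≤ sin (α / 2) := sin_nonneg_of_nonneg_of_le_pi (by linarith) (by linarith)
  have h₃ : 0 ≤ sin (β / 2) := sin_nonneg_of_nonneg_of_le_pi (by linarith) (by linarith)
  rw [← sub_nonneg, key]
  exact mul_nonneg (mul_nonneg (mul_nonneg (by norm_num) h₁) h₂) h₃

/-- With `z = r e^{iα}` and `w = 1 - s e^{-iβ}`, the left-hand side is `|z - w| ^ 2`. -/
lemma sq_add_sq_lt_max_sq {r s α β : ℝ} (hr : 1 < r) (hs : 1 < s)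
    (hα : α ∈ Set.Ioo (π / 3) (2 * π / 3)) (hβ : β ∈ Set.Ioo (π / 3) (2 * π / 3))
    (hαβ : α + β ≤ π) :
    (r * cos α + s * cos β - 1) ^ 2 + (r * sin α - s * sin β) ^ 2 < max r s ^ 2 := by
  wlog hsr : s ≤ r generalizing r s α β
  · have := this hs hr hβ hα (by linarith) (le_of_not_ge hsr)
    rw [max_comm]
    linarith
  obtain ⟨hα₁, hα₂⟩ := hα
  obtain ⟨hβ₁, hβ₂⟩ := hβ
  have hcos : cos (2 * π / 3) = -(1 / 2) := by
    rw [show 2 * π / 3 = π - π / 3 by ring, cos_pi_sub, cos_pi_div_three]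
  have hcα : -(1 / 2) < cos α := by
    rw [← hcos]
    exact cos_lt_cos_of_nonneg_of_le_pi (by linarith) (by linarith) hα₂
  have hcαβ : cos (α + β) < -(1 / 2) := by
    rw [← hcos]
    exact cos_lt_cos_of_nonneg_of_le_pi (by linarith [pi_pos]) hαβ (by linarith)
  have hJ := one_add_cos_add_le (by linarith [pi_pos]) (by linarith [pi_pos]) hαβ
  have hexp : (r * cos α + s * cos β - 1) ^ 2 + (r * sin α - s * sin β) ^ 2
      = r ^ 2 + s ^ 2 + 1 + 2 * r * s * cos (α + β) - 2 * r * cos α - 2 * s * cos β := by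
    rw [cos_add]
    linear_combination r ^ 2 * sin_sq_add_cos_sq α + s ^ 2 * sin_sq_add_cos_sq β
  rw [hexp, max_eq_left hsr]
  nlinarith [mul_nonneg (sub_nonneg.2 hsr) (by linarith : (0 : ℝ) ≤ cos α + 1 / 2),
    mul_nonneg (by linarith : (0 : ℝ) ≤ s) (sub_nonneg.2 hJ),
    mul_pos (mul_pos (by linarith : (0 : ℝ) < s) (by linarith : (0 : ℝ) < r - 1))
      (by linarith : (0 : ℝ) < -(1 / 2) - cos (α + β)),
    mul_pos (by linarith : (0 : ℝ) < s - 1) (by linarith : (0 : ℝ) < r - s + 1)]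

end Angles

section Complex

lemma cos_arg_sub_lt_half {a p q : ℂ} (hp : dist p a < dist p q) (hq : dist q a < dist q p) :
    cos ((p - a).arg - (q - a).arg) < 1 / 2 := by
  set u := p - a
  set v := q - a
  have hpq : dist p q = ‖u - v‖ := by rw [dist_eq_norm]; congr 1; ring
  rw [dist_eq_norm, hpq] at hp
  rw [dist_eq_norm, dist_comm, hpq] at hq
  change ‖u‖ < ‖u - v‖ at hp
  change ‖v‖ < ‖u - v‖ at hq
  have hu : 0 < ‖u‖ := norm_pos_iff.2 fun h => by simp [h] at hq
  have hv : 0 < ‖v‖ := norm_pos_iff.2 fun h => by simp [h] at hp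
  have hcos : ‖u‖ * ‖v‖ * cos (u.arg - v.arg) = u.re * v.re + u.im * v.im := by
    rw [cos_sub, ← Complex.norm_mul_cos_arg u, ← Complex.norm_mul_cos_arg v,
      ← Complex.norm_mul_sin_arg u, ← Complex.norm_mul_sin_arg v]
    ring
  have hlaw : ‖u - v‖ ^ 2 = ‖u‖ ^ 2 + ‖v‖ ^ 2 - 2 * (u.re * v.re + u.im * v.im) := by
    rw [Complex.sq_norm, Complex.sq_norm, Complex.sq_norm, Complex.normSq_apply,
      Complex.normSq_apply, Complex.normSq_apply, Complex.sub_re, Complex.sub_im]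
    ring
  rw [← mul_lt_mul_iff_right₀ (mul_pos hu hv), hcos]
  rcases le_total ‖u‖ ‖v‖ with h | h <;> nlinarith

/-- Measured from the direction of `b`, the directions of the other points of `S` lie in
`(π / 3, 5π / 3)` and are pairwise more than `π / 3` apart. -/
lemma exists_ccwAngle_span (a : ℂ) {S : Finset ℂ}
    (hwide : ∀ p ∈ S, ∀ q ∈ S, p ≠ q → dist p a < dist p q) {b : ℂ} (hb : b ∈ S)
    (hS : 2 ≤ #S) :
    ∃ p ∈ S.erase b, ∃ q ∈ S.erase b,
      π / 3 < ccwAngle (b - a).arg (p - a).arg ∧ ccwAngle (b - a).arg (q - a).arg < 5 * π / 3 ∧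
      ((#S : ℝ) - 2) * (π / 3)
        ≤ ccwAngle (b - a).arg (q - a).arg - ccwAngle (b - a).arg (p - a).arg := by
  classical
  have hcard : #(S.erase b) = #S - 1 := card_erase_of_mem hb
  have hwide' : ∀ p ∈ S.erase b, ∀ q ∈ S.erase b, p ≠ q → dist p a < dist p q :=
    fun p hp q hq => hwide p (mem_of_mem_erase hp) q (mem_of_mem_erase hq)
  have hρ : ∀ p ∈ S.erase b, ccwAngle (b - a).arg (p - a).arg ∈ Set.Ioo (π / 3) (5 * π / 3) :=
    fun p hp => ccwAngle_mem_Ioo (cos_arg_sub_lt_half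
      (hwide p (mem_of_mem_erase hp) b hb (ne_of_mem_erase hp))
      (hwide b hb p (mem_of_mem_erase hp) (ne_of_mem_erase hp).symm))
  obtain ⟨p, hp, q, hq, hpq⟩ := exists_card_sub_one_mul_le_sub (card_pos.1 (by omega)) _
    fun p hp q hq hpq => pi_div_three_le_abs_ccwAngle_sub
      (cos_arg_sub_lt_half (hwide' p hp q hq hpq) (hwide' q hq p hp hpq.symm)) (b - a).arg
  refine ⟨p, hp, q, hq, (hρ p hp).1, (hρ q hq).2, ?_⟩
  rw [hcard, Nat.cast_sub (by omega)] at hpq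
  linarith

lemma card_le_five_of_forall_dist_lt (a : ℂ) {S : Finset ℂ}
    (hwide : ∀ p ∈ S, ∀ q ∈ S, p ≠ q → dist p a < dist p q) : #S ≤ 5 := by
  by_contra! h6
  obtain ⟨b, hb⟩ := card_pos.1 (by omega : 0 < #S)
  obtain ⟨p, -, q, -, hp, hq, hpq⟩ := exists_ccwAngle_span a hwide hb (by omega)
  have h4 : (4 : ℝ) ≤ #S - 2 := by rw [le_sub_iff_add_le]; exact_mod_cast h6
  nlinarith [pi_pos]

lemma norm_sub_sq_eq (z w : ℂ) :
    ‖z - w‖ ^ 2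
      = (‖z‖ * cos (ccwAngle 0 z.arg) + ‖w - 1‖ * cos (ccwAngle π (w - 1).arg) - 1) ^ 2
        + (‖z‖ * sin (ccwAngle 0 z.arg) + ‖w - 1‖ * sin (ccwAngle π (w - 1).arg)) ^ 2 := by
  rw [cos_ccwAngle, cos_ccwAngle, sin_ccwAngle, sin_ccwAngle, sub_zero, cos_sub_pi,
    sin_sub_pi, mul_neg, mul_neg, Complex.norm_mul_cos_arg, Complex.norm_mul_cos_arg,
    Complex.norm_mul_sin_arg, Complex.norm_mul_sin_arg, Complex.sq_norm, Complex.normSq_apply]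
  simp only [Complex.sub_re, Complex.sub_im, Complex.one_re, Complex.one_im]
  ring

/-- The two alternatives put `z` (seen from `0`) and `w` (seen from `1`) on the same side of
the real axis, at angles to the segment `[0, 1]` in `(π / 3, 2π / 3)` summing to at most `π`. -/
lemma dist_lt_max_of_ccwAngle {z w : ℂ} (hz : 1 < dist z 0) (hw : 1 < dist w 1)
    (h : (ccwAngle 0 z.arg ∈ Set.Ioo (π / 3) (2 * π / 3) ∧
          ccwAngle π (w - 1).arg ∈ Set.Ioo (4 * π / 3) (5 * π / 3) ∧
          ccwAngle 0 z.arg + π ≤ ccwAngle π (w - 1).arg) ∨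
        (ccwAngle 0 z.arg ∈ Set.Ioo (4 * π / 3) (5 * π / 3) ∧
          ccwAngle π (w - 1).arg ∈ Set.Ioo (π / 3) (2 * π / 3) ∧
          ccwAngle π (w - 1).arg + π ≤ ccwAngle 0 z.arg)) :
    dist z w < max (dist z 0) (dist w 1) := by
  simp only [dist_eq_norm, sub_zero] at hz hw ⊢
  rw [← pow_lt_pow_iff_left₀ (norm_nonneg _) (by positivity) two_ne_zero, norm_sub_sq_eq]
  rcases h with ⟨⟨hρ₁, hρ₂⟩, ⟨hσ₁, hσ₂⟩, hρσ⟩ | ⟨⟨hρ₁, hρ₂⟩, ⟨hσ₁, hσ₂⟩, hρσ⟩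
  · have := sq_add_sq_lt_max_sq hz hw ⟨hρ₁, hρ₂⟩ (β := 2 * π - ccwAngle π (w - 1).arg)
      ⟨by linarith, by linarith⟩ (by linarith)
    rw [cos_two_pi_sub, sin_two_pi_sub] at this
    linarith
  · have := sq_add_sq_lt_max_sq hz hw (α := 2 * π - ccwAngle 0 z.arg)
      ⟨by linarith, by linarith⟩ ⟨hσ₁, hσ₂⟩ (by linarith)
    rw [cos_two_pi_sub, sin_two_pi_sub] at this
    linarith

lemma card_nnPreimage_one_lt_five {X : Finset ℂ} (h01 : IsNN X 0 1) (h10 : IsNN X 1 0)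
    (h0 : 5 ≤ #(nnPreimage X 0)) : #(nnPreimage X 1) < 5 := by
  by_contra! h1
  have hπ : ∀ n : ℕ, 5 ≤ n → π ≤ ((n : ℝ) - 2) * (π / 3) := fun n hn => by
    have : (5 : ℝ) ≤ n := by exact_mod_cast hn
    nlinarith [pi_pos]
  obtain ⟨z₁, hz₁, z₂, hz₂, hz₁l, hz₂u, hz⟩ := exists_ccwAngle_span 0
    (fun _ hp _ hq => dist_lt_of_mem_nnPreimage hp hq) (mem_nnPreimage.2 h10) (by omega)
  obtain ⟨w₁, hw₁, w₂, hw₂, hw₁l, hw₂u, hw⟩ := exists_ccwAngle_span 1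
    (fun _ hp _ hq => dist_lt_of_mem_nnPreimage hp hq) (mem_nnPreimage.2 h01) (by omega)
  simp only [sub_zero, zero_sub, Complex.arg_one, Complex.arg_neg_one]
    at hz₁l hz₂u hz hw₁l hw₂u hw
  have hz := (hπ _ h0).trans hz
  have hw := (hπ _ h1).trans hw
  have hfar : ∀ z ∈ (nnPreimage X 0).erase 1, ∀ w ∈ (nnPreimage X 1).erase 0,
      ¬ dist z w < max (dist z 0) (dist w 1) := fun z hz w hw =>
    (max_dist_lt_dist zero_ne_one (mem_of_mem_erase hz) (ne_of_mem_erase hz)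
      (mem_of_mem_erase hw) (ne_of_mem_erase hw)).not_gt
  have hZ : ∀ z ∈ (nnPreimage X 0).erase 1, 1 < dist z 0 := fun z hz => by
    simpa using h01.dist_lt_of_mem_nnPreimage (mem_of_mem_erase hz) (ne_of_mem_erase hz)
  have hW : ∀ w ∈ (nnPreimage X 1).erase 0, 1 < dist w 1 := fun w hw => by
    simpa using h10.dist_lt_of_mem_nnPreimage (mem_of_mem_erase hw) (ne_of_mem_erase hw)
  rcases le_or_gt (ccwAngle 0 z₁.arg + π) (ccwAngle π (w₂ - 1).arg) with h | h
  · refine hfar z₁ hz₁ w₂ hw₂ (dist_lt_max_of_ccwAngle (hZ z₁ hz₁) (hW w₂ hw₂) (.inl ?_))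
    exact ⟨⟨hz₁l, by linarith⟩, ⟨by linarith, hw₂u⟩, h⟩
  · refine hfar z₂ hz₂ w₁ hw₁ (dist_lt_max_of_ccwAngle (hZ z₂ hz₂) (hW w₁ hw₁) (.inr ?_))
    exact ⟨⟨by linarith, hz₂u⟩, ⟨hw₁l, by linarith⟩, by linarith⟩

end Complex

section Plane

variable {α : Type*} [MetricSpace α] {e : α → ℂ} {X : Finset α} {x y : α}

lemma Isometry.card_le_five_of_forall_dist_lt (he : Isometry e) (a : α) {S : Finset α}
    (hwide : ∀ p ∈ S, ∀ q ∈ S, p ≠ q → dist p a < dist p q) : #S ≤ 5 := by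
  classical
  rw [← card_image_of_injective S he.injective]
  refine _root_.card_le_five_of_forall_dist_lt (e a) ?_
  simpa only [forall_mem_image, he.dist_eq, he.injective.ne_iff] using hwide

lemma card_nnPreimage_le_five (he : Isometry e) (X : Finset α) (x : α) :
    #(nnPreimage X x) ≤ 5 :=
  he.card_le_five_of_forall_dist_lt x fun _ hp _ hq => dist_lt_of_mem_nnPreimage hp hq

lemma IsNN.symm_of_five_le_card (he : Isometry e) (hxy : IsNN X x y)
    (h5 : 5 ≤ #(nnPreimage X x)) : IsNN X y x := by
  classical
  by_contra h
  have := he.card_le_five_of_forall_dist_lt x fun _ hp _ hq =>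
    dist_lt_of_mem_insert_nnPreimage hxy hp hq
  rw [card_insert_of_notMem (mt mem_nnPreimage.1 h)] at this
  omega

lemma IsNN.card_nnPreimage_lt_five (he : Isometry e) (hxy : IsNN X x y) (hyx : IsNN X y x)
    (h5 : 5 ≤ #(nnPreimage X x)) : #(nnPreimage X y) < 5 := by
  classical
  set g : α → ℂ := fun p => (e p - e x) / (e y - e x)
  have hc : 0 < (dist y x)⁻¹ := inv_pos.2 (dist_pos.2 hyx.ne)
  have hg : ∀ p q, dist (g p) (g q) = (dist y x)⁻¹ * dist p q := by
    intro p q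
    rw [dist_eq_norm, div_sub_div_same, sub_sub_sub_cancel_right, norm_div, ← dist_eq_norm,
      ← dist_eq_norm, he.dist_eq, he.dist_eq, inv_mul_eq_div]
  have hgx : g x = 0 := by simp [g]
  have hgy : g y = 1 := div_self (sub_ne_zero.2 (he.injective.ne hyx.ne))
  have h01 : IsNN (X.image g) 0 1 := hgx ▸ hgy ▸ (isNN_image_iff hc hg).2 hxy
  have h10 : IsNN (X.image g) 1 0 := hgx ▸ hgy ▸ (isNN_image_iff hc hg).2 hyx
  have := card_nnPreimage_one_lt_five h01 h10 (by rwa [← hgx, card_nnPreimage_image hc hg])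
  rwa [← hgy, card_nnPreimage_image hc hg] at this

end Plane

/-- In any finite subset of the Euclidean plane with all pairwise distances
distinct and at least two elements, at most `7/9` of the elements are not the
nearest neighbour of any other element. -/
theorem stmt_6 (X : Finset (EuclideanSpace ℝ (Fin 2))) (hcard : 2 ≤ X.card)
    (hdist : ∀ x ∈ X, ∀ y ∈ X, ∀ x' ∈ X, ∀ y' ∈ X, x ≠ y → x' ≠ y' →
      dist x y = dist x' y' →
      ({x, y} : Set (EuclideanSpace ℝ (Fin 2))) = {x', y'}) :
    9 * {x : EuclideanSpace ℝ (Fin 2) | x ∈ X ∧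
        ∀ y ∈ X, y ≠ x →
          ¬ (∀ z ∈ X, z ≠ y → z ≠ x → dist y x < dist y z)}.ncard
      ≤ 7 * X.card := by
  classical
  have he := (Complex.isometryOfOrthonormal (EuclideanSpace.basisFun (Fin 2) ℝ)).symm.isometry
  choose! nn hnn using fun y (hy : y ∈ X) => exists_isNN hcard hy (injOn_dist_erase hdist hy)
  have hmaps : X.image nn ⊆ X := image_subset_iff.2 fun y hy => (hnn y hy).right_mem
  have hfib := filter_eq_nnPreimage hnn
  have hcount := two_mul_card_le_mul_card_image 4 (fun y hy => (hnn y hy).right_mem)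
    (fun x _ => hfib x ▸ card_nnPreimage_le_five he X x)
    (fun x hx h5 => (isNN_iff_eq hnn (hnn x hx).right_mem).1
      ((hnn x hx).symm_of_five_le_card he (hfib x ▸ h5)))
    (fun x hx hxx h5 => hfib (nn x) ▸ (hnn x hx).card_nnPreimage_lt_five he
      ((isNN_iff_eq hnn (hnn x hx).right_mem).2 hxx) (hfib x ▸ h5))
  rw [← coe_sdiff_image_eq hnn, Set.ncard_coe_finset, card_sdiff_of_subset hmaps]
  have := card_le_card hmaps
  omega
end

section
/- The bound 7/9 is attained: there exists a finite subset X of the Euclidean plane with all pairwise distances distinct, |X| = 9, such that exactly 7 of its elements are not the nearest neighbour of any other element. -/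
/-!
Take two roots at distance 103 that are each other's nearest neighbours, four points whose
nearest neighbour is the first root and three whose nearest neighbour is the second. These
seven leaves are nobody's nearest neighbour. With integer coordinates, every comparison of
distances is a comparison of integer squared distances, which is decided by computation.
-/

open Finset

section NearestNeighbours

variable {γ β : Type*} [LT β]

/-- `x` is the nearest neighbour of `y` in `S`. -/
def IsNearest (d : γ → γ → β) (S : Finset γ) (y x : γ) : Prop :=
  ∀ z ∈ S, z ≠ y → z ≠ x → d y x < d y z

def lonelyPoints (d : γ → γ → β) (S : Finset γ) : Set γ :=
  {x | x ∈ S ∧ ∀ y ∈ S, y ≠ x → ¬ IsNearest d S y x}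

def HasDistinctDistances (d : γ → γ → β) (S : Finset γ) : Prop :=
  ∀ x ∈ S, ∀ y ∈ S, ∀ x' ∈ S, ∀ y' ∈ S, x ≠ y → x' ≠ y' → d x y = d x' y' →
    ({x, y} : Set γ) = {x', y'}

end NearestNeighbours

section OrderRealisation

variable {ι α β : Type*} [Dist α] [LinearOrder β] {f : ι → α} {q : ι → ι → β}

theorem dist_eq_iff_of_dist_lt_iff
    (hq : ∀ i j k l, dist (f i) (f j) < dist (f k) (f l) ↔ q i j < q k l) (i j k l : ι) :
    dist (f i) (f j) = dist (f k) (f l) ↔ q i j = q k l := by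
  simp only [le_antisymm_iff, ← not_lt, hq]

theorem isNearest_image_iff [Fintype ι] [DecidableEq α] (hf : Function.Injective f)
    (hq : ∀ i j k l, dist (f i) (f j) < dist (f k) (f l) ↔ q i j < q k l) (i j : ι) :
    IsNearest dist (univ.image f) (f j) (f i) ↔ IsNearest q univ j i := by
  simp only [IsNearest, forall_mem_image, mem_univ, true_implies, hf.ne_iff, hq]

theorem lonelyPoints_image [Fintype ι] [DecidableEq α] (hf : Function.Injective f)
    (hq : ∀ i j k l, dist (f i) (f j) < dist (f k) (f l) ↔ q i j < q k l) :
    lonelyPoints dist (univ.image f) = f '' lonelyPoints q univ := by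
  ext x
  constructor
  · rintro ⟨hx, h⟩
    obtain ⟨i, -, rfl⟩ := mem_image.1 hx
    refine ⟨i, ⟨mem_univ i, fun j _ hji => ?_⟩, rfl⟩
    rw [← isNearest_image_iff hf hq]
    exact h _ (mem_image_of_mem f (mem_univ j)) (hf.ne hji)
  · rintro ⟨i, ⟨-, h⟩, rfl⟩
    refine ⟨mem_image_of_mem f (mem_univ i), ?_⟩
    simp only [forall_mem_image, mem_univ, true_implies, hf.ne_iff, isNearest_image_iff hf hq]
    exact fun j => h j (mem_univ j)

theorem hasDistinctDistances_image [Fintype ι] [DecidableEq α]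
    (hq : ∀ i j k l, dist (f i) (f j) < dist (f k) (f l) ↔ q i j < q k l)
    (h : HasDistinctDistances q univ) : HasDistinctDistances dist (univ.image f) := by
  simp only [HasDistinctDistances, forall_mem_image, mem_univ, true_implies]
  intro i j k l hij hkl hd
  have hpair := h i (mem_univ i) j (mem_univ j) k (mem_univ k) l (mem_univ l)
    (ne_of_apply_ne f hij) (ne_of_apply_ne f hkl) ((dist_eq_iff_of_dist_lt_iff hq i j k l).1 hd)
  simpa only [Set.image_pair] using congrArg (f '' ·) hpair

end OrderRealisation

namespace NinePoints

def cx : Fin 9 → ℤ := ![-2, 101, 16, -87, -87, 17, 137, 212, 131]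
def cy : Fin 9 → ℤ := ![-2, -2, 100, 62, -62, -106, 102, 2, -111]

def sqDist (i j : Fin 9) : ℤ := (cx i - cx j) ^ 2 + (cy i - cy j) ^ 2

noncomputable def point (i : Fin 9) : EuclideanSpace ℝ (Fin 2) :=
  !₂[(cx i : ℝ), (cy i : ℝ)]

theorem point_injective : Function.Injective point := by
  intro i j h
  have hx : cx i = cx j := by simpa [point] using congrArg (· 0) h
  have hy : cy i = cy j := by simpa [point] using congrArg (· 1) h
  exact (by decide : ∀ i j : Fin 9, cx i = cx j → cy i = cy j → i = j) i j hx hy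

theorem dist_point (i j : Fin 9) : dist (point i) (point j) = √(sqDist i j : ℝ) := by
  simp only [EuclideanSpace.dist_eq, Fin.sum_univ_two, point,
    Matrix.cons_val_zero, Matrix.cons_val_one, Real.dist_eq, sq_abs, sqDist]
  push_cast
  ring_nf

theorem dist_point_lt_iff (i j k l : Fin 9) :
    dist (point i) (point j) < dist (point k) (point l) ↔ sqDist i j < sqDist k l := by
  have hnonneg : (0 : ℝ) ≤ sqDist i j := by unfold sqDist; positivity
  rw [dist_point, dist_point, Real.sqrt_lt_sqrt_iff hnonneg, Int.cast_lt]

theorem hasDistinctDistances_sqDist : HasDistinctDistances sqDist univ := by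
  have key : ∀ i j k l : Fin 9, i ≠ j → k ≠ l → sqDist i j = sqDist k l →
      (i = k ∧ j = l) ∨ (i = l ∧ j = k) := by decide
  intro i _ j _ k _ l _ hij hkl hd
  rcases key i j k l hij hkl hd with ⟨rfl, rfl⟩ | ⟨rfl, rfl⟩
  · rfl
  · exact Set.pair_comm _ _

theorem lonelyPoints_sqDist :
    lonelyPoints sqDist univ = ↑({2, 3, 4, 5, 6, 7, 8} : Finset (Fin 9)) := by
  have key : ∀ i : Fin 9, (∀ j, j ≠ i → ¬ IsNearest sqDist univ j i) ↔
      i ∈ ({2, 3, 4, 5, 6, 7, 8} : Finset (Fin 9)) := by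
    unfold IsNearest; decide
  ext i
  simp [lonelyPoints, key]

end NinePoints

open NinePoints in
/-- The bound `7/9` is sharp: there is a nine-point subset of the Euclidean
plane with all pairwise distances distinct in which exactly seven points are
not the nearest neighbour of any other point. -/
theorem stmt_7 :
    ∃ X : Finset (EuclideanSpace ℝ (Fin 2)),
      X.card = 9 ∧
      (∀ x ∈ X, ∀ y ∈ X, ∀ x' ∈ X, ∀ y' ∈ X, x ≠ y → x' ≠ y' →
        dist x y = dist x' y' →
        ({x, y} : Set (EuclideanSpace ℝ (Fin 2))) = {x', y'}) ∧
      {x : EuclideanSpace ℝ (Fin 2) | x ∈ X ∧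
        ∀ y ∈ X, y ≠ x →
          ¬ (∀ z ∈ X, z ≠ y → z ≠ x → dist y x < dist y z)}.ncard = 7 := by
  refine ⟨univ.image point, ?_, hasDistinctDistances_image dist_point_lt_iff
    hasDistinctDistances_sqDist, ?_⟩
  · rw [card_image_of_injective _ point_injective, card_univ, Fintype.card_fin]
  · change (lonelyPoints dist (univ.image point)).ncard = 7
    rw [lonelyPoints_image point_injective dist_point_lt_iff, lonelyPoints_sqDist,
      Set.ncard_image_of_injective _ point_injective, Set.ncard_coe_finset]
    rfl
end

section
/- For every weighted complete graph on an even number 2m of vertices with nonnegative real edge weights w, there exists a partition of the vertex set into two sets A, B with |A| = |B| = m such that the total weight of edges between A and B is at least half the total weight of all edges: Σ_{x∈A, y∈B} w({x,y}) ≥ (1/2) Σ_{{x,y}} w({x,y}). -/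
open Finset

lemma count_in_out {V : Type*} [Fintype V] [DecidableEq V] {m : ℕ} (hm : 1 ≤ m)
    (hcard : Fintype.card V = 2 * m) {a b : V} (hab : a ≠ b) :
    ((Finset.univ.powersetCard m).filter (fun A : Finset V => a ∈ A ∧ b ∉ A)).card
      = (2 * m - 2).choose (m - 1) := by
  have h2 : (((Finset.univ : Finset V) \ {a, b}).powersetCard (m - 1)).card
      = (2 * m - 2).choose (m - 1) := by
    rw [card_powersetCard, card_sdiff_of_subset (by intro x _; exact mem_univ x),
      card_univ, hcard, card_pair hab]
  rw [← h2]
  refine Finset.card_bij' (fun A _ => A.erase a) (fun B _ => insert a B) ?hi ?hj ?li ?ri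
  case hi =>
    intro A hA
    simp only [mem_filter, mem_powersetCard] at hA
    obtain ⟨⟨hsub, hcA⟩, ha, hb⟩ := hA
    rw [mem_powersetCard]
    constructor
    · intro x hx
      rw [mem_erase] at hx
      rw [mem_sdiff]
      refine ⟨mem_univ x, ?_⟩
      simp only [mem_insert, mem_singleton]
      rintro (rfl | rfl)
      · exact hx.1 rfl
      · exact hb hx.2
    · rw [card_erase_of_mem ha, hcA]
  case hj =>
    intro B hB
    rw [mem_powersetCard] at hB
    obtain ⟨hsub, hcB⟩ := hB
    have haB : a ∉ B := by
      intro h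
      have := hsub h
      simp at this
    have hbB : b ∉ B := by
      intro h
      have := hsub h
      simp at this
    simp only [mem_filter, mem_powersetCard]
    refine ⟨⟨fun x _ => mem_univ x, ?_⟩, mem_insert_self a B, ?_⟩
    · rw [card_insert_of_notMem haB, hcB]
      omega
    · simp only [mem_insert]
      rintro (rfl | h)
      · exact hab rfl
      · exact hbB h
  case li =>
    intro A hA
    simp only [mem_filter] at hA
    exact insert_erase hA.2.1
  case ri =>
    intro B hB
    rw [mem_powersetCard] at hB
    have haB : a ∉ B := by
      intro h
      have := hB.1 h
      simp at this
    exact erase_insert haB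

lemma choose_key (n : ℕ) : (2 * n + 2).choose (n + 1) ≤ 4 * ((2 * n).choose n) := by
  have h1 : (2 * n + 1).choose n ≤ 2 * (2 * n).choose n := by
    have hs : (2 * n + 1).choose n = (2 * n + 1).choose (n + 1) := by
      have h := Nat.choose_symm (show n + 1 ≤ 2 * n + 1 by omega)
      have he : 2 * n + 1 - (n + 1) = n := by omega
      rw [he] at h
      exact h
    rw [hs, Nat.choose_succ_succ]
    have hle : (2 * n).choose (n + 1) ≤ (2 * n).choose n := by
      have := Nat.choose_le_middle (n + 1) (2 * n)
      simpa [Nat.mul_div_cancel_left n (by norm_num : 0 < 2), mul_comm] using this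
    simp only [Nat.succ_eq_add_one]
    omega
  have h2 : (2 * n + 2) * ((2 * n + 1).choose n) = (2 * n + 2).choose (n + 1) * (n + 1) := by
    have := Nat.add_one_mul_choose_eq (2 * n + 1) n
    simpa [Nat.succ_eq_add_one] using this
  have h3 : (2 * n + 2).choose (n + 1) * (n + 1) ≤ (4 * ((2 * n).choose n)) * (n + 1) := by
    calc (2 * n + 2).choose (n + 1) * (n + 1) = (2 * n + 2) * ((2 * n + 1).choose n) := h2.symm
      _ ≤ (2 * n + 2) * (2 * (2 * n).choose n) := Nat.mul_le_mul_left _ h1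
      _ = (4 * ((2 * n).choose n)) * (n + 1) := by ring
  exact Nat.le_of_mul_le_mul_right h3 (by omega)

lemma inter_card_one {V : Type*} [DecidableEq V] {a b : V} (hab : a ≠ b) (A : Finset V) :
    (({a, b} : Finset V) ∩ A).card = 1 ↔ (a ∈ A ∧ b ∉ A) ∨ (b ∈ A ∧ a ∉ A) := by
  by_cases ha : a ∈ A <;> by_cases hb : b ∈ A
  · have : ({a, b} : Finset V) ∩ A = {a, b} := by
      rw [inter_eq_left]
      intro x hx
      simp only [mem_insert, mem_singleton] at hx
      rcases hx with rfl | rfl <;> assumption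
    rw [this, card_pair hab]
    simp [ha, hb]
  · have : ({a, b} : Finset V) ∩ A = {a} := by
      ext x
      simp only [mem_inter, mem_insert, mem_singleton]
      constructor
      · rintro ⟨rfl | rfl, h⟩
        · rfl
        · exact absurd h hb
      · rintro rfl; exact ⟨Or.inl rfl, ha⟩
    rw [this, card_singleton]
    simp [ha, hb]
  · have : ({a, b} : Finset V) ∩ A = {b} := by
      ext x
      simp only [mem_inter, mem_insert, mem_singleton]
      constructor
      · rintro ⟨rfl | rfl, h⟩
        · exact absurd h ha
        · rfl
      · rintro rfl; exact ⟨Or.inr rfl, hb⟩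
    rw [this, card_singleton]
    simp [ha, hb]
  · have : ({a, b} : Finset V) ∩ A = ∅ := by
      ext x
      simp only [mem_inter, mem_insert, mem_singleton, notMem_empty, iff_false]
      rintro ⟨rfl | rfl, h⟩ <;> [exact ha h; exact hb h]
    rw [this]
    simp [ha, hb]

/-- For any nonnegative edge weighting of the complete graph on `2m`
vertices, there is a balanced bipartition whose cut weight is at least half
the total weight (Poljak–Turzík). -/
theorem stmt_15 {V : Type*} [Fintype V] [DecidableEq V] (m : ℕ)
    (hcard : Fintype.card V = 2 * m)
    (w : Finset V → ℝ) (hw : ∀ p, 0 ≤ w p) :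
    ∃ A : Finset V, A.card = m ∧
      (1 / 2) * ∑ p ∈ (Finset.univ : Finset V).powersetCard 2, w p ≤
        ∑ p ∈ ((Finset.univ : Finset V).powersetCard 2).filter
            (fun p => (p ∩ A).card = 1), w p := by
  rcases Nat.eq_zero_or_pos m with hm0 | hm
  · subst hm0
    have : IsEmpty V := Fintype.card_eq_zero_iff.mp (by omega)
    refine ⟨∅, rfl, ?_⟩
    rw [Finset.univ_eq_empty]
    have he : (∅ : Finset V).powersetCard 2 = ∅ := by
      rw [Finset.powersetCard_eq_empty]; simp
    simp [he]
  set S := (Finset.univ : Finset V).powersetCard m with hS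
  set P := (Finset.univ : Finset V).powersetCard 2 with hP
  have hSne : S.Nonempty := by
    rw [hS, powersetCard_nonempty, card_univ, hcard]; omega
  set N := (2 * m - 2).choose (m - 1) with hN
  set C := (2 * m).choose m with hC
  have hSc : S.card = C := by rw [hS, card_powersetCard, card_univ, hcard]
  have hCN : C ≤ 4 * N := by
    obtain ⟨n, rfl⟩ : ∃ n, m = n + 1 := ⟨m - 1, by omega⟩
    have h1 : 2 * (n + 1) - 2 = 2 * n := by omega
    have h2 : 2 * (n + 1) = 2 * n + 2 := by omega
    rw [hN, hC, h1, h2]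
    simpa using choose_key n
  -- count per pair
  have key : ∀ p ∈ P, (S.filter (fun A => (p ∩ A).card = 1)).card = 2 * N := by
    intro p hp
    rw [hP, mem_powersetCard] at hp
    obtain ⟨a, b, hab, rfl⟩ := Finset.card_eq_two.mp hp.2
    have hfe : S.filter (fun A => (({a, b} : Finset V) ∩ A).card = 1)
        = S.filter (fun A => (a ∈ A ∧ b ∉ A) ∨ (b ∈ A ∧ a ∉ A)) := by
      apply filter_congr
      intro A _
      exact_mod_cast inter_card_one hab A
    rw [hfe, filter_or, card_union_of_disjoint]
    · rw [hS, count_in_out hm hcard hab, count_in_out hm hcard hab.symm, hN]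
      omega
    · rw [Finset.disjoint_left]
      intro A hA1 hA2
      simp only [mem_filter] at hA1 hA2
      exact hA2.2.2 hA1.2.1
  -- double counting
  set T := ∑ p ∈ P, w p with hT
  have hsum : ∑ A ∈ S, ∑ p ∈ P.filter (fun p => (p ∩ A).card = 1), w p
      = ∑ p ∈ P, ((S.filter (fun A => (p ∩ A).card = 1)).card : ℝ) * w p := by
    have h1 : ∀ A ∈ S, ∑ p ∈ P.filter (fun p => (p ∩ A).card = 1), w p
        = ∑ p ∈ P, if (p ∩ A).card = 1 then w p else 0 := by
      intro A _
      rw [Finset.sum_filter]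
    rw [Finset.sum_congr rfl h1, Finset.sum_comm]
    apply Finset.sum_congr rfl
    intro p _
    rw [← Finset.sum_filter, Finset.sum_const, nsmul_eq_mul]
  have hTnn : 0 ≤ T := Finset.sum_nonneg fun p _ => hw p
  have havg : ∑ A ∈ S, (1 / 2 * T) ≤ ∑ A ∈ S, ∑ p ∈ P.filter (fun p => (p ∩ A).card = 1), w p := by
    rw [hsum, Finset.sum_const, hSc, nsmul_eq_mul]
    calc (C : ℝ) * (1 / 2 * T) = ∑ p ∈ P, (C : ℝ) / 2 * w p := by
          rw [← Finset.mul_sum, ← hT]; ring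
      _ ≤ ∑ p ∈ P, ((S.filter (fun A => (p ∩ A).card = 1)).card : ℝ) * w p := by
          apply Finset.sum_le_sum
          intro p hp
          apply mul_le_mul_of_nonneg_right _ (hw p)
          rw [key p hp]
          have : (C : ℝ) ≤ 4 * N := by exact_mod_cast hCN
          push_cast
          linarith
  obtain ⟨A, hA, hle⟩ := Finset.exists_le_of_sum_le hSne havg
  rw [hS, mem_powersetCard] at hA
  exact ⟨A, hA.2, hle⟩
end

section
/- Let X be a finite set of n points on the unit sphere in ℝ³ such that all pairwise Euclidean distances exceed 1 (equivalently, all pairwise angular distances exceed π/3). Then n ≤ 13. In particular, there do not exist 14 rays in ℝ³ from a common origin with pairwise angles all greater than π/3. -/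
/-!
Delsarte's linear programming bound. The polynomial
`f t = 63 (2t - 1) (25t + 8)² (25t + 22)²` is nonpositive for `t ≤ 1/2`, and on the unit
sphere `f ⟪x, y⟫ = c₀ + ∑ⱼ μⱼ gⱼ(x) gⱼ(y)` with `μⱼ ≥ 0` and `c₀ = 11407137`. Summing over
`X × X`, the right-hand side gives at least `c₀ |X|²`, while only the diagonal terms of the
left-hand side are positive, giving at most `|X| f 1`. Hence `|X| ≤ f 1 / c₀ ≈ 13.29`.
-/

open Finset
open scoped InnerProductSpace

section PositiveKernel

variable {α ι : Type*} [Fintype ι] (X : Finset α) (c : ℝ) (μ : ι → ℝ) (g : ι → α → ℝ)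

theorem sum_sum_const_add_sum_mul_eq :
    ∑ x ∈ X, ∑ y ∈ X, (c + ∑ j, μ j * (g j x * g j y)) =
      c * #X ^ 2 + ∑ j, μ j * (∑ x ∈ X, g j x) ^ 2 := by
  simp only [sum_add_distrib, sum_const, nsmul_eq_mul, sq, sum_mul, mul_sum]
  rw [sum_comm]
  simp only [sum_comm (s := X) (t := univ)]
  ring_nf

theorem mul_card_sq_le_sum_sum (hμ : ∀ j, 0 ≤ μ j) :
    c * #X ^ 2 ≤ ∑ x ∈ X, ∑ y ∈ X, (c + ∑ j, μ j * (g j x * g j y)) := by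
  rw [sum_sum_const_add_sum_mul_eq]
  exact le_add_of_nonneg_right (sum_nonneg fun j _ ↦ mul_nonneg (hμ j) (sq_nonneg _))

theorem sum_sum_le_card_mul {K : α → α → ℝ} {D : ℝ} (hdiag : ∀ x ∈ X, K x x ≤ D)
    (hoff : ∀ x ∈ X, ∀ y ∈ X, x ≠ y → K x y ≤ 0) :
    ∑ x ∈ X, ∑ y ∈ X, K x y ≤ #X * D := by
  classical
  have hrow : ∀ x ∈ X, ∑ y ∈ X, K x y ≤ D := fun x hx ↦ by
    rw [← add_sum_erase X _ hx]
    have hrest : ∑ y ∈ X.erase x, K x y ≤ 0 := sum_nonpos fun y hy ↦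
      hoff x hx y (mem_of_mem_erase hy) (ne_of_mem_erase hy).symm
    linarith [hdiag x hx]
  simpa using sum_le_sum hrow

theorem mul_card_le_of_eq_const_add_sum_mul (hX : X.Nonempty) (hμ : ∀ j, 0 ≤ μ j)
    {K : α → α → ℝ} {D : ℝ} (hK : ∀ x ∈ X, ∀ y ∈ X, K x y = c + ∑ j, μ j * (g j x * g j y))
    (hdiag : ∀ x ∈ X, K x x ≤ D) (hoff : ∀ x ∈ X, ∀ y ∈ X, x ≠ y → K x y ≤ 0) :
    c * #X ≤ D := by
  have hsum : c * #X ^ 2 ≤ #X * D := calc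
    c * #X ^ 2 ≤ ∑ x ∈ X, ∑ y ∈ X, (c + ∑ j, μ j * (g j x * g j y)) :=
      mul_card_sq_le_sum_sum X c μ g hμ
    _ = ∑ x ∈ X, ∑ y ∈ X, K x y :=
      sum_congr rfl fun x hx ↦ sum_congr rfl fun y hy ↦ (hK x hx y hy).symm
    _ ≤ #X * D := sum_sum_le_card_mul X hdiag hoff
  have hcard : (0 : ℝ) < #X := by exact_mod_cast hX.card_pos
  nlinarith

end PositiveKernel

theorem real_inner_lt_half_of_one_lt_dist {E : Type*} [NormedAddCommGroup E]
    [InnerProductSpace ℝ E] {x y : E} (hx : ‖x‖ = 1) (hy : ‖y‖ = 1) (hxy : 1 < dist x y) :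
    ⟪x, y⟫_ℝ < 1 / 2 := by
  have h : dist x y ^ 2 = 2 - 2 * ⟪x, y⟫_ℝ := by
    rw [dist_eq_norm, norm_sub_sq_real, hx, hy]; ring
  nlinarith

theorem sum_sq_coord_eq_one {x : EuclideanSpace ℝ (Fin 3)} (hx : ‖x‖ = 1) :
    x 0 ^ 2 + x 1 ^ 2 + x 2 ^ 2 = 1 := by
  have h := real_inner_self_eq_norm_sq x
  simp only [hx, PiLp.inner_apply, Fin.sum_univ_three, RCLike.inner_apply, conj_trivial] at h
  linear_combination h

def lpPoly (t : ℝ) : ℝ := 63 * (2 * t - 1) * (25 * t + 8) ^ 2 * (25 * t + 22) ^ 2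

theorem lpPoly_nonpos {t : ℝ} (ht : t ≤ 1 / 2) : lpPoly t ≤ 0 := by
  unfold lpPoly
  have : 0 ≤ (25 * t + 8) ^ 2 * (25 * t + 22) ^ 2 := by positivity
  nlinarith

theorem lpPoly_one : lpPoly 1 = 151552863 := by norm_num [lpPoly]

/- Certificate that `(x, y) ↦ lpPoly ⟪x, y⟫_ℝ - 11407137` is a positive semidefinite kernel on
the unit sphere, see `lpPoly_inner_eq`. -/
noncomputable def certWeight : Fin 35 → ℝ :=
  ![31500 / 34607,
    31500 / 34607,
    31500 / 34607,
    5250 / 90589,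
    2250 / 34645034442673,
    1781250 / 382441957,
    374062500 / 1091954671,
    374062500 / 1091954671,
    374062500 / 1091954671,
    10660407187500 / 31553,
    10660407187500 / 31553,
    10660407187500 / 31553,
    888367265625 / 69214,
    2665101796875 / 69214,
    252 / 6598577,
    252 / 6598577,
    252 / 6598577,
    22500 / 277,
    70312500 / 1282787,
    5299875000000 / 4631,
    39375 / 41236064620440304,
    39375 / 41236064620440304,
    39375 / 41236064620440304,
    3125 / 469392323692979713456,
    3125 / 469392323692979713456,
    3125 / 469392323692979713456,
    3906250 / 53299690811798395038383,
    3906250 / 53299690811798395038383,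
    3906250 / 53299690811798395038383,
    5257812500 / 18016848482569123719,
    5257812500 / 18016848482569123719,
    5257812500 / 18016848482569123719,
    1874364939062500 / 25390029,
    1874364939062500 / 25390029,
    1874364939062500 / 25390029]

noncomputable def certPoly : Fin 35 → (Fin 3 → ℝ) → ℝ :=
  ![fun v ↦ 34607 * v 0 * v 1 * v 2^2 - 1018 * v 0 * v 1^3 - 1018 * v 0^3 * v 1,
    fun v ↦ -1018 * v 0 * v 2^3 + 34607 * v 0 * v 1^2 * v 2 - 1018 * v 0^3 * v 2,
    fun v ↦ -1018 * v 1 * v 2^3 - 1018 * v 1^3 * v 2 + 34607 * v 0^2 * v 1 * v 2,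
    fun v ↦ -8143 * v 2^4 - 13232 * v 1^2 * v 2^2 - 5089 * v 1^4 + 90589 * v 0^2 * v 2^2
      - 13232 * v 0^2 * v 1^2 - 8143 * v 0^4,
    fun v ↦ -281804801 * v 2^4 + 2677093699 * v 1^2 * v 2^2 - 268334625 * v 1^4
      - 457919824 * v 0^2 * v 1^2 - 189585199 * v 0^4,
    fun v ↦ -28499 * v 2^4 - 37661 * v 1^4 + 311463 * v 0^2 * v 1^2 - 37661 * v 0^4,
    fun v ↦ 31553 * v 1 * v 2^3 - 3054 * v 1^3 * v 2,
    fun v ↦ 31553 * v 0 * v 1^3 - 3054 * v 0^3 * v 1,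
    fun v ↦ 31553 * v 0 * v 2^3 - 3054 * v 0^3 * v 2,
    fun v ↦ v 1^3 * v 2,
    fun v ↦ v 0^3 * v 2,
    fun v ↦ v 0^3 * v 1,
    fun v ↦ -v 2^4 + 2 * v 1^4 - v 0^4,
    fun v ↦ v 2^4 - v 0^4,
    fun v ↦ 369601 * v 0 * v 2^4 + 6598577 * v 0 * v 1^2 * v 2^2 + 369601 * v 0 * v 1^4
      + 268577 * v 0^3 * v 2^2 + 268577 * v 0^3 * v 1^2 - 101024 * v 0^5,
    fun v ↦ 369601 * v 1 * v 2^4 + 268577 * v 1^3 * v 2^2 - 101024 * v 1^5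
      + 6598577 * v 0^2 * v 1 * v 2^2 + 268577 * v 0^2 * v 1^3 + 369601 * v 0^4 * v 1,
    fun v ↦ -101024 * v 2^5 + 268577 * v 1^2 * v 2^3 + 369601 * v 1^4 * v 2 + 268577 * v 0^2 * v 2^3
      + 6598577 * v 0^2 * v 1^2 * v 2 + 369601 * v 0^4 * v 2,
    fun v ↦ 3878 * v 0 * v 1 * v 2^3 + 753 * v 0 * v 1^3 * v 2 + 753 * v 0^3 * v 1 * v 2,
    fun v ↦ 4631 * v 0 * v 1^3 * v 2 + 753 * v 0^3 * v 1 * v 2,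
    fun v ↦ v 0^3 * v 1 * v 2,
    fun v ↦ 3743318928 * v 1 * v 2^4 + 24996943808 * v 1^3 * v 2^2 + 633071755 * v 1^5
      - 592337798 * v 0^2 * v 1^3 - 1225409553 * v 0^4 * v 1,
    fun v ↦ 633071755 * v 2^5 - 592337798 * v 1^2 * v 2^3 - 1225409553 * v 1^4 * v 2
      + 24996943808 * v 0^2 * v 2^3 + 3743318928 * v 0^4 * v 2,
    fun v ↦ 3743318928 * v 0 * v 2^4 - 1225409553 * v 0 * v 1^4 + 24996943808 * v 0^3 * v 2^2
      - 592337798 * v 0^3 * v 1^2 + 633071755 * v 0^5,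
    fun v ↦ 245505226589 * v 2^5 + 9464106210678 * v 1^2 * v 2^3 + 1407056044089 * v 1^4 * v 2
      - 430610788464 * v 0^4 * v 2,
    fun v ↦ -430610788464 * v 1 * v 2^4 + 245505226589 * v 1^5 + 9464106210678 * v 0^2 * v 1^3
      + 1407056044089 * v 0^4 * v 1,
    fun v ↦ -430610788464 * v 0 * v 2^4 + 1407056044089 * v 0 * v 1^4
      + 9464106210678 * v 0^3 * v 1^2 + 245505226589 * v 0^5,
    fun v ↦ 2128809913833 * v 1 * v 2^4 - 82440197357 * v 1^5 - 61096732131 * v 0^4 * v 1,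
    fun v ↦ -82440197357 * v 2^5 + 2128809913833 * v 1^4 * v 2 - 61096732131 * v 0^4 * v 2,
    fun v ↦ -61096732131 * v 0 * v 2^4 + 2128809913833 * v 0 * v 1^4 - 82440197357 * v 0^5,
    fun v ↦ 1066381218 * v 0 * v 2^4 - 42516863 * v 0^5,
    fun v ↦ -42516863 * v 2^5 + 1066381218 * v 0^4 * v 2,
    fun v ↦ -42516863 * v 1^5 + 1066381218 * v 0^4 * v 1,
    fun v ↦ v 1^5,
    fun v ↦ v 2^5,
    fun v ↦ v 0^5]

theorem certWeight_nonneg (j : Fin 35) : 0 ≤ certWeight j := by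
  fin_cases j <;> norm_num [certWeight]

theorem lpPoly_inner_eq {x y : EuclideanSpace ℝ (Fin 3)} (hx : ‖x‖ = 1) (hy : ‖y‖ = 1) :
    lpPoly ⟪x, y⟫_ℝ = 11407137 + ∑ j, certWeight j * (certPoly j x * certPoly j y) := by
  have hx' := sum_sq_coord_eq_one hx
  have hy' := sum_sq_coord_eq_one hy
  have hinner : ⟪x, y⟫_ℝ = x 0 * y 0 + x 1 * y 1 + x 2 * y 2 := by
    simp only [PiLp.inner_apply, Fin.sum_univ_three, RCLike.inner_apply, conj_trivial]; ring
  rw [hinner]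
  simp only [lpPoly, certWeight, certPoly, Fin.sum_univ_succ, Fin.sum_univ_zero,
    Matrix.cons_val_zero, Matrix.cons_val_succ]
  linear_combination
    (y 0 ^ 2 + y 1 ^ 2 + y 2 ^ 2) *
        ((13358625 + 12729024 * (x 0 * y 0 + x 1 * y 1 + x 2 * y 2)) *
            (1 + x 0 ^ 2 + x 1 ^ 2 + x 2 ^ 2) * (y 0 ^ 2 + y 1 ^ 2 + y 2 ^ 2) +
          16033500 * (x 0 * y 0 + x 1 * y 1 + x 2 * y 2) ^ 2 -
          39532500 * (x 0 * y 0 + x 1 * y 1 + x 2 * y 2) ^ 3) * hx' +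
      ((13358625 + 12729024 * (x 0 * y 0 + x 1 * y 1 + x 2 * y 2)) *
            (1 + y 0 ^ 2 + y 1 ^ 2 + y 2 ^ 2) +
          16033500 * (x 0 * y 0 + x 1 * y 1 + x 2 * y 2) ^ 2 -
          39532500 * (x 0 * y 0 + x 1 * y 1 + x 2 * y 2) ^ 3) * hy'

/-- A finite set of points on the unit sphere in `ℝ³` whose pairwise
Euclidean distances all exceed `1` has at most `13` elements. -/
theorem stmt_17 (X : Finset (EuclideanSpace ℝ (Fin 3)))
    (hsphere : ∀ x ∈ X, ‖x‖ = 1)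
    (hfar : ∀ x ∈ X, ∀ y ∈ X, x ≠ y → 1 < dist x y) :
    X.card ≤ 13 := by
  rcases X.eq_empty_or_nonempty with rfl | hX
  · simp
  have hbound : (11407137 : ℝ) * X.card ≤ 151552863 :=
    mul_card_le_of_eq_const_add_sum_mul X _ certWeight (fun j x ↦ certPoly j x) hX
      certWeight_nonneg (K := fun x y ↦ lpPoly ⟪x, y⟫_ℝ)
      (fun x hx y hy ↦ lpPoly_inner_eq (hsphere x hx) (hsphere y hy))
      (fun x hx ↦ by rw [real_inner_self_eq_norm_sq, hsphere x hx, one_pow, lpPoly_one])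
      (fun x hx y hy hxy ↦ lpPoly_nonpos
        (real_inner_lt_half_of_one_lt_dist (hsphere x hx) (hsphere y hy) (hfar x hx y hy hxy)).le)
  have hlt : (X.card : ℝ) < 14 := by linarith
  exact Nat.lt_succ_iff.mp (mod_cast hlt)
end

section
/- For every finite set X and every binary cluster tree on X (a chain of partitions P₁, ..., P_n from the discrete to the indiscrete partition, each obtained from the previous by merging two blocks), there exists an injective map f : X → ℤ such that for every index k and blocks A ≠ B of P_k that get merged at step k, every distance |f(a) − f(b)| with a ∈ A, b ∈ B is strictly smaller than every distance |f(x) − f(y)| where x, y lie in distinct blocks of P_k other than the pair {A,B} being merged, and strictly larger than every distance |f(x) − f(y)| with x ≠ y in a common block of P_k. -/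
/-- Every cluster tree on a finite set has a cluster representation on the
integer line: an injective map such that at each merge step, the distances
between the two merged blocks are strictly larger than all within-block
distances and strictly smaller than all other between-block distances. -/
theorem stmt_18 {X : Type*} [Fintype X] [DecidableEq X]
    (n : ℕ) (hn : n = Fintype.card X) (hn1 : 1 ≤ n)
    (P : ℕ → Finset (Finset X))
    (hcover : ∀ k, k < n → ∀ x : X, ∃! C, C ∈ P k ∧ x ∈ C)
    (hne : ∀ k, k < n → ∀ C ∈ P k, C.Nonempty)
    (hdisc : P 0 = Finset.univ.image (fun x : X => ({x} : Finset X)))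
    (hlast : P (n - 1) = {Finset.univ})
    (hmerge : ∀ k, k + 1 < n → ∃ A ∈ P k, ∃ B ∈ P k, A ≠ B ∧
      P (k + 1) = insert (A ∪ B) (((P k).erase A).erase B)) :
    ∃ f : X → ℤ, Function.Injective f ∧
      ∀ k, k + 1 < n → ∀ A ∈ P k, ∀ B ∈ P k, A ≠ B →
        P (k + 1) = insert (A ∪ B) (((P k).erase A).erase B) →
        ∀ a ∈ A, ∀ b ∈ B,
          (∀ C ∈ P k, ∀ x ∈ C, ∀ y ∈ C, x ≠ y → |f x - f y| < |f a - f b|) ∧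
          (∀ C ∈ P k, ∀ D ∈ P k, C ≠ D →
            ({C, D} : Set (Finset X)) ≠ {A, B} →
            ∀ x ∈ C, ∀ y ∈ D, |f a - f b| < |f x - f y|) := by
  classical
  -- blocks at the same time are disjoint
  have hdisj : ∀ k, k < n → ∀ C ∈ P k, ∀ D ∈ P k, ∀ z : X, z ∈ C → z ∈ D → C = D := by
    intro k hk C hC D hD z hzC hzD
    obtain ⟨E, -, hu⟩ := hcover k hk z
    rw [hu C ⟨hC, hzC⟩, hu D ⟨hD, hzD⟩]
  -- chain property
  have hchain : ∀ k, k + 1 < n → ∀ C ∈ P k, ∃ D ∈ P (k + 1), C ⊆ D := by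
    intro k hk C hC
    obtain ⟨A, hA, B, hB, hAB, hP⟩ := hmerge k hk
    by_cases hCA : C = A
    · exact ⟨A ∪ B, by rw [hP]; exact Finset.mem_insert_self _ _, by rw [hCA]; exact Finset.subset_union_left⟩
    by_cases hCB : C = B
    · exact ⟨A ∪ B, by rw [hP]; exact Finset.mem_insert_self _ _, by rw [hCB]; exact Finset.subset_union_right⟩
    · exact ⟨C, by
        rw [hP]
        exact Finset.mem_insert_of_mem (Finset.mem_erase.mpr ⟨hCB, Finset.mem_erase.mpr ⟨hCA, hC⟩⟩),
        subset_rfl⟩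
  -- sharing is monotone in time
  have hmono : ∀ (d j : ℕ), j + d < n → ∀ x y : X,
      (∃ C ∈ P j, x ∈ C ∧ y ∈ C) → ∃ C ∈ P (j + d), x ∈ C ∧ y ∈ C := by
    intro d
    induction d with
    | zero => intro j _ x y h; exact h
    | succ d ih =>
      intro j hj x y h
      obtain ⟨C, hC, hx, hy⟩ := ih j (by omega) x y h
      obtain ⟨D, hD, hCD⟩ := hchain (j + d) (by omega) C hC
      exact ⟨D, by rwa [show j + (d+1) = j + d + 1 by ring], hCD hx, hCD hy⟩
  have hmono' : ∀ (j k : ℕ), j ≤ k → k < n → ∀ x y : X,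
      (∃ C ∈ P j, x ∈ C ∧ y ∈ C) → ∃ C ∈ P k, x ∈ C ∧ y ∈ C := by
    intro j k hjk hk x y h
    have := hmono (k - j) j (by omega) x y h
    rwa [show j + (k - j) = k by omega] at this
  -- existence of a common block eventually
  have hex : ∀ x y : X, ∃ k, ∃ C ∈ P k, x ∈ C ∧ y ∈ C := by
    intro x y
    exact ⟨n - 1, Finset.univ, by rw [hlast]; exact Finset.mem_singleton_self _,
      Finset.mem_univ x, Finset.mem_univ y⟩
  set m : X → X → ℕ := fun x y => Nat.find (hex x y) with hm_def
  have hm_spec : ∀ x y : X, ∃ C ∈ P (m x y), x ∈ C ∧ y ∈ C := fun x y => Nat.find_spec (hex x y)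
  have hm_le : ∀ x y : X, ∀ k, (∃ C ∈ P k, x ∈ C ∧ y ∈ C) → m x y ≤ k :=
    fun x y k h => Nat.find_min' (hex x y) h
  have hm_bound : ∀ x y : X, m x y ≤ n - 1 := by
    intro x y
    exact hm_le x y (n - 1) ⟨Finset.univ, by rw [hlast]; exact Finset.mem_singleton_self _,
      Finset.mem_univ x, Finset.mem_univ y⟩
  have hm_gt : ∀ x y : X, ∀ k, k < n → ¬(∃ C ∈ P k, x ∈ C ∧ y ∈ C) → k < m x y := by
    intro x y k hk hnot
    by_contra h
    exact hnot (hmono' (m x y) k (by omega) hk x y (hm_spec x y))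
  have hm_symm : ∀ x y : X, m x y = m y x := by
    intro x y
    apply le_antisymm
    · obtain ⟨C, h1, h2, h3⟩ := hm_spec y x
      exact hm_le x y _ ⟨C, h1, h3, h2⟩
    · obtain ⟨C, h1, h2, h3⟩ := hm_spec x y
      exact hm_le y x _ ⟨C, h1, h3, h2⟩
  -- main inductive construction
  have main : ∀ k, k < n → ∃ f : X → ℤ,
      ∀ C ∈ P k, ∀ x ∈ C, ∀ y ∈ C, x ≠ y →
        (4:ℤ) ^ (m x y) ≤ |f x - f y| ∧ |f x - f y| ≤ 3 * 4 ^ (m x y) := by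
    intro k
    induction k with
    | zero =>
      intro _
      refine ⟨fun _ => 0, ?_⟩
      intro C hC x hx y hy hxy
      rw [hdisc] at hC
      obtain ⟨z, -, rfl⟩ := Finset.mem_image.mp hC
      rw [Finset.mem_singleton] at hx hy
      exact absurd (hx.trans hy.symm) hxy
    | succ k ih =>
      intro hk1
      have hk : k < n := by omega
      obtain ⟨f, hf⟩ := ih hk
      obtain ⟨A, hA, B, hB, hAB, hP⟩ := hmerge k hk1
      have hAne : (A.image f).Nonempty := (hne k hk A hA).image f
      have hBne : (B.image f).Nonempty := (hne k hk B hB).image f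
      set M : ℤ := (A.image f).max' hAne with hM
      set m0 : ℤ := (B.image f).min' hBne with hm0
      set S : ℤ := 4 ^ (k + 1) + M - m0 with hS
      refine ⟨fun x => if x ∈ B then f x + S else f x, ?_⟩
      have hABdisj : ∀ z : X, z ∈ A → z ∈ B → False := by
        intro z h1 h2
        exact hAB (hdisj k hk A hA B hB z h1 h2)
      -- distance bounds within A from max
      have hMA : ∀ a ∈ A, M - f a ≤ 3 * 4 ^ k := by
        intro a ha
        obtain ⟨a', ha', hfa'⟩ := Finset.mem_image.mp ((A.image f).max'_mem hAne)
        by_cases h : a' = a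
        · subst h; rw [hM, ← hfa']; simp
        · have hb := hf A hA a' ha' a ha h
          have hmle : m a' a ≤ k := hm_le a' a k ⟨A, hA, ha', ha⟩
          have : (4:ℤ) ^ (m a' a) ≤ 4 ^ k := pow_le_pow_right₀ (by norm_num) hmle
          have h2 : M - f a ≤ |f a' - f a| := by
            rw [hM, ← hfa']; exact le_trans (by linarith [le_abs_self (f a' - f a)]) le_rfl
          linarith [hb.2]
      have hmB : ∀ b ∈ B, f b - m0 ≤ 3 * 4 ^ k := by
        intro b hb
        obtain ⟨b', hb', hfb'⟩ := Finset.mem_image.mp ((B.image f).min'_mem hBne)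
        by_cases h : b' = b
        · subst h; rw [hm0, ← hfb']; simp
        · have hbnd := hf B hB b hb b' hb' (fun hh => h hh.symm)
          have hmle : m b b' ≤ k := hm_le b b' k ⟨B, hB, hb, hb'⟩
          have : (4:ℤ) ^ (m b b') ≤ 4 ^ k := pow_le_pow_right₀ (by norm_num) hmle
          have h2 : f b - m0 ≤ |f b - f b'| := by
            rw [hm0, ← hfb']; exact le_trans (by linarith [le_abs_self (f b - f b')]) le_rfl
          linarith [hbnd.2]
      have hMa : ∀ a ∈ A, f a ≤ M := fun a ha => Finset.le_max' _ _ (Finset.mem_image_of_mem f ha)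
      have hmb : ∀ b ∈ B, m0 ≤ f b := fun b hb => Finset.min'_le _ _ (Finset.mem_image_of_mem f hb)
      -- cross merge time
      have hcrossm : ∀ a ∈ A, ∀ b ∈ B, m a b = k + 1 := by
        intro a ha b hb
        have h1 : m a b ≤ k + 1 := hm_le a b (k + 1)
          ⟨A ∪ B, by rw [hP]; exact Finset.mem_insert_self _ _,
           Finset.mem_union_left _ ha, Finset.mem_union_right _ hb⟩
        have h2 : k < m a b := by
          apply hm_gt a b k hk
          rintro ⟨C, hC, haC, hbC⟩
          have e1 : C = A := hdisj k hk C hC A hA a haC ha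
          have e2 : C = B := hdisj k hk C hC B hB b hbC hb
          exact hAB (e1 ▸ e2)
        omega
      -- cross distance bounds
      have hcross : ∀ a ∈ A, ∀ b ∈ B,
          (4:ℤ) ^ (k + 1) ≤ (f b + S) - f a ∧ (f b + S) - f a ≤ 3 * 4 ^ (k + 1) := by
        intro a ha b hb
        have h1 := hMA a ha
        have h2 := hmB b hb
        have h3 := hMa a ha
        have h4 := hmb b hb
        have hp : (0:ℤ) < 4 ^ k := by positivity
        constructor
        · rw [hS]; linarith
        · rw [hS]
          have : (4:ℤ) ^ (k + 1) = 4 * 4 ^ k := by ring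
          rw [this] at *
          linarith
      intro C hC x hx y hy hxy
      rw [hP] at hC
      rcases Finset.mem_insert.mp hC with hCAB | hC'
      · subst hCAB
        rcases Finset.mem_union.mp hx with hxA | hxB
        · rcases Finset.mem_union.mp hy with hyA | hyB
          · -- both in A
            have hxB' : x ∉ B := fun h => hABdisj x hxA h
            have hyB' : y ∉ B := fun h => hABdisj y hyA h
            simp only [if_neg hxB', if_neg hyB']
            exact hf A hA x hxA y hyA hxy
          · -- x ∈ A, y ∈ B : cross
            have hxB' : x ∉ B := fun h => hABdisj x hxA h
            simp only [if_neg hxB', if_pos hyB]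
            obtain ⟨hc1, hc2⟩ := hcross x hxA y hyB
            have hme : m x y = k + 1 := hcrossm x hxA y hyB
            rw [hme]
            rw [abs_sub_comm, abs_of_nonneg (by
              have : (0:ℤ) < 4 ^ (k+1) := by positivity
              linarith)]
            exact ⟨hc1, hc2⟩
        · rcases Finset.mem_union.mp hy with hyA | hyB
          · -- x ∈ B, y ∈ A : cross
            have hyB' : y ∉ B := fun h => hABdisj y hyA h
            simp only [if_pos hxB, if_neg hyB']
            obtain ⟨hc1, hc2⟩ := hcross y hyA x hxB
            have hme : m x y = k + 1 := by rw [hm_symm]; exact hcrossm y hyA x hxB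
            rw [hme]
            rw [abs_of_nonneg (by
              have : (0:ℤ) < 4 ^ (k+1) := by positivity
              linarith)]
            exact ⟨hc1, hc2⟩
          · -- both in B
            simp only [if_pos hxB, if_pos hyB]
            have : f x + S - (f y + S) = f x - f y := by ring
            rw [this]
            exact hf B hB x hxB y hyB hxy
      · -- other block, unchanged
        have hCne : C ≠ B := (Finset.mem_erase.mp hC').1
        have hC'' : C ∈ P k := Finset.mem_of_mem_erase (Finset.mem_of_mem_erase hC')
        have hxB' : x ∉ B := fun h => hCne (hdisj k hk C hC'' B hB x hx h)
        have hyB' : y ∉ B := fun h => hCne (hdisj k hk C hC'' B hB y hy h)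
        simp only [if_neg hxB', if_neg hyB']
        exact hf C hC'' x hx y hy hxy
  -- conclude
  obtain ⟨f, hf⟩ := main (n - 1) (by omega)
  have huniv : Finset.univ ∈ P (n - 1) := by rw [hlast]; exact Finset.mem_singleton_self _
  have H : ∀ x y : X, x ≠ y →
      (4:ℤ) ^ (m x y) ≤ |f x - f y| ∧ |f x - f y| ≤ 3 * 4 ^ (m x y) :=
    fun x y hxy => hf Finset.univ huniv x (Finset.mem_univ x) y (Finset.mem_univ y) hxy
  refine ⟨f, ?_, ?_⟩
  · intro x y hfeq
    by_contra hxy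
    have := (H x y hxy).1
    rw [hfeq, sub_self, abs_zero] at this
    have : (0:ℤ) < 4 ^ (m x y) := by positivity
    omega
  · intro k hk1 A hA B hB hAB hP a ha b hb
    have hk : k < n := by omega
    have hab_ne : a ≠ b := by
      intro h; subst h
      exact hAB (hdisj k hk A hA B hB a ha hb)
    have hab_m : m a b = k + 1 := by
      have h1 : m a b ≤ k + 1 := hm_le a b (k + 1)
        ⟨A ∪ B, by rw [hP]; exact Finset.mem_insert_self _ _,
         Finset.mem_union_left _ ha, Finset.mem_union_right _ hb⟩
      have h2 : k < m a b := by
        apply hm_gt a b k hk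
        rintro ⟨C, hC, haC, hbC⟩
        exact hAB ((hdisj k hk C hC A hA a haC ha) ▸ (hdisj k hk C hC B hB b hbC hb))
      omega
    obtain ⟨hab1, hab2⟩ := H a b hab_ne
    rw [hab_m] at hab1 hab2
    constructor
    · intro C hC x hx y hy hxy
      have hmxy : m x y ≤ k := hm_le x y k ⟨C, hC, hx, hy⟩
      have h1 := (H x y hxy).2
      have h2 : (4:ℤ) ^ (m x y) ≤ 4 ^ k := pow_le_pow_right₀ (by norm_num) hmxy
      have hp : (0:ℤ) < 4 ^ k := by positivity
      have : (4:ℤ) ^ (k + 1) = 4 * 4 ^ k := by ring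
      linarith [this ▸ hab1]
    · intro C hC D hD hCD hpair x hx y hy
      have hxy : x ≠ y := by
        intro h; subst h
        exact hCD (hdisj k hk C hC D hD x hx hy)
      have hmk2 : k + 2 ≤ m x y := by
        by_contra h
        push_neg at h
        have hsh : ∃ E ∈ P (k + 1), x ∈ E ∧ y ∈ E :=
          hmono' (m x y) (k + 1) (by omega) hk1 x y (hm_spec x y)
        obtain ⟨E, hE, hxE, hyE⟩ := hsh
        rw [hP] at hE
        rcases Finset.mem_insert.mp hE with hEAB | hE'
        · subst hEAB
          have hCAB : C = A ∨ C = B := by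
            rcases Finset.mem_union.mp hxE with h' | h'
            · exact Or.inl (hdisj k hk C hC A hA x hx h')
            · exact Or.inr (hdisj k hk C hC B hB x hx h')
          have hDAB : D = A ∨ D = B := by
            rcases Finset.mem_union.mp hyE with h' | h'
            · exact Or.inl (hdisj k hk D hD A hA y hy h')
            · exact Or.inr (hdisj k hk D hD B hB y hy h')
          rcases hCAB with rfl | rfl <;> rcases hDAB with rfl | rfl
          · exact hCD rfl
          · exact hpair rfl
          · exact hpair (Set.pair_comm _ _)
          · exact hCD rfl
        · have hE'' : E ∈ P k := Finset.mem_of_mem_erase (Finset.mem_of_mem_erase hE')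
          have e1 : C = E := hdisj k hk C hC E hE'' x hx hxE
          have e2 : D = E := hdisj k hk D hD E hE'' y hy hyE
          exact hCD (e1.trans e2.symm)
      have h1 := (H x y hxy).1
      have h2 : (4:ℤ) ^ (k + 2) ≤ 4 ^ (m x y) := pow_le_pow_right₀ (by norm_num) hmk2
      have hp : (0:ℤ) < 4 ^ (k + 1) := by positivity
      have : (4:ℤ) ^ (k + 2) = 4 * 4 ^ (k + 1) := by ring
      linarith
end
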